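/- arXiv:1907.03515 — 8 statements merged into one kernel-verified Lean document; each statement's English description precedes it below -/
import Mathlib

section
/- If A ∈ M₂(Q) is conjugate in GL(2, R) to an element of SO(2), then A has finite order if and only if tr(A) ∈ Z. -/
open Matrix

theorem trace_int_of_finite_order (A : Matrix (Fin 2) (Fin 2) ℚ) (hdet : A.det = 1)
    (k : ℕ) (hk : 0 < k) (hAk : A ^ k = 1) : ∃ m : ℤ, A.trace = (m : ℚ) := by
  set t : ℚ := A.trace with ht
  by_contra hcon
  have hden : t.den ≠ 1 := by
    intro h1
    exact hcon ⟨t.num, by rw [← Rat.num_div_den t, h1]; simp⟩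
  set a : ℤ := t.num with ha
  set b : ℤ := (t.den : ℤ) with hb
  have hbQ : ((b : ℚ)) ≠ 0 := by
    simp [hb]
  have htb : (b : ℚ) * t = (a : ℚ) := by
    rw [hb, ha]; rw [mul_comm]; exact_mod_cast Rat.mul_den_eq_num t
  -- Cayley–Hamilton
  have hsq : A * A = t • A - 1 := by
    rw [Matrix.det_fin_two] at hdet
    rw [ht, Matrix.trace_fin_two]
    ext i j
    fin_cases i <;> fin_cases j <;>
      simp [Matrix.mul_apply, Fin.sum_univ_two, Matrix.one_apply] <;> nlinarith [hdet]
  have key : ((b:ℚ)) • (A * A) = ((a:ℚ)) • A - ((b:ℚ)) • (1 : Matrix (Fin 2) (Fin 2) ℚ) := by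
    rw [hsq, smul_sub, smul_smul, htb]
  -- the integer sequence
  set w : ℕ → ℤ × ℤ := fun n => Nat.rec ((1 : ℤ), (0 : ℤ))
    (fun _ p => (a * p.1 + b * p.2, -(b * p.1))) n with hw
  have hw0 : w 0 = (1, 0) := rfl
  have hws : ∀ n, w (n + 1) = (a * (w n).1 + b * (w n).2, -(b * (w n).1)) := fun n => rfl
  have claim1 : ∀ n : ℕ, ((b:ℚ))^n • A^(n+1)
      = (((w n).1 : ℚ)) • A + (((w n).2 : ℚ)) • (1 : Matrix (Fin 2) (Fin 2) ℚ) := by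
    intro n
    induction n with
    | zero => rw [hw0]; simp
    | succ n ih =>
      have h1 : ((b:ℚ))^(n+1) • A^(n+2) = (b:ℚ) • ((((b:ℚ))^n • A^(n+1)) * A) := by
        rw [smul_mul_assoc, smul_smul, ← pow_succ', ← pow_succ]
      rw [h1, ih, add_mul, smul_mul_assoc, smul_mul_assoc, one_mul, smul_add,
        smul_smul, mul_comm (b:ℚ), ← smul_smul, key, hws]
      push_cast
      module
  -- p prime dividing b
  set p : ℕ := t.den.minFac with hp
  have hpp : p.Prime := Nat.minFac_prime hden
  have hpb : (p : ℤ) ∣ b := Int.natCast_dvd_natCast.mpr (Nat.minFac_dvd t.den)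
  have hpa : ¬ ((p : ℤ) ∣ a) := by
    intro hdvd
    have h1 : p ∣ a.natAbs := Int.natCast_dvd_natCast.mp (by
      rwa [Int.dvd_natAbs])
    have h2 : p ∣ Nat.gcd a.natAbs t.den := Nat.dvd_gcd h1 (Nat.minFac_dvd _)
    rw [t.reduced] at h2
    exact hpp.one_lt.ne' (Nat.eq_one_of_dvd_one h2)
  have claim2 : ∀ n : ℕ, ¬ ((p:ℤ) ∣ (w n).1) := by
    intro n
    induction n with
    | zero =>
      rw [hw0]
      intro h
      have h1 : (p:ℤ) = 1 := Int.eq_one_of_dvd_one (by positivity) h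
      have h2 : p = 1 := by exact_mod_cast h1
      exact hpp.one_lt.ne' h2
    | succ n ih =>
      rw [hws]
      intro hdvd
      have h1 : (p:ℤ) ∣ a * (w n).1 := (Int.dvd_add_right (hpb.mul_right _)).mp
        (by rwa [add_comm] at hdvd)
      rcases (Int.Prime.dvd_mul' (by exact_mod_cast hpp) h1) with h | h
      · exact hpa h
      · exact ih h
  -- conclude A is scalar
  obtain ⟨k', rfl⟩ : ∃ k', k = k' + 1 := ⟨k - 1, (Nat.succ_pred_eq_of_pos hk).symm⟩
  have hfin := claim1 k'
  rw [hAk] at hfin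
  set u : ℤ := (w k').1 with hu
  set v : ℤ := (w k').2 with hv
  have hu0 : (u : ℚ) ≠ 0 := by
    intro h
    have h2 : (w k').1 = 0 := by rw [← hu]; exact_mod_cast h
    exact claim2 k' (by rw [h2]; exact dvd_zero _)
  have hA : A = (((b:ℚ)^k' - (v:ℚ)) / (u:ℚ)) • (1 : Matrix (Fin 2) (Fin 2) ℚ) := by
    have h2 : (u:ℚ) • A = ((b:ℚ)^k' - (v:ℚ)) • (1 : Matrix (Fin 2) (Fin 2) ℚ) := by
      rw [sub_smul, hfin]; module
    calc A = ((u:ℚ))⁻¹ • ((u:ℚ) • A) := by rw [smul_smul, inv_mul_cancel₀ hu0, one_smul]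
    _ = _ := by rw [h2, smul_smul, div_eq_inv_mul]
  set c : ℚ := ((b:ℚ)^k' - (v:ℚ)) / (u:ℚ) with hc
  have hck : c ^ (k' + 1) = 1 := by
    have : A ^ (k' + 1) = c ^ (k' + 1) • (1 : Matrix (Fin 2) (Fin 2) ℚ) := by
      rw [hA, smul_pow, one_pow]
    rw [hAk] at this
    have := congrFun (congrFun this 0) 0
    simpa [Matrix.one_apply] using this.symm
  have hc1 : c = 1 ∨ c = -1 := by
    have h1 : |c| ^ (k'+1) = 1 := by rw [← abs_pow, hck, abs_one]
    have h2 : |c| = 1 := by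
      rcases lt_trichotomy |c| 1 with h' | h' | h'
      · have := pow_lt_one₀ (abs_nonneg c) h' (Nat.succ_ne_zero k')
        rw [h1] at this; exact absurd this (lt_irrefl 1)
      · exact h'
      · have := one_lt_pow₀ h' (Nat.succ_ne_zero k')
        rw [h1] at this; exact absurd this (lt_irrefl 1)
    rcases abs_eq (by norm_num : (0:ℚ) ≤ 1) |>.mp h2 with h | h <;> simp [h]
  have htc : t = 2 * c := by
    rw [ht, hA, Matrix.trace_fin_two]
    simp [Matrix.one_apply]
    ring
  rcases hc1 with h | h
  · exact hcon ⟨2, by rw [htc, h]; norm_num⟩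
  · exact hcon ⟨-2, by rw [htc, h]; push_cast; ring⟩

lemma map_eq_one_aux (A : Matrix (Fin 2) (Fin 2) ℚ)
    (h : A.map (fun q : ℚ => (q:ℝ)) = 1) : A = 1 := by
  have h2 : A.map (fun q : ℚ => (q:ℝ)) = (1 : Matrix (Fin 2) (Fin 2) ℚ).map (fun q : ℚ => (q:ℝ)) := by
    rw [h]; ext i j; simp [Matrix.map_apply, Matrix.one_apply, apply_ite]
  exact Matrix.map_injective Rat.cast_injective h2

lemma map_eq_neg_one_aux (A : Matrix (Fin 2) (Fin 2) ℚ)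
    (h : A.map (fun q : ℚ => (q:ℝ)) = -1) : A = -1 := by
  have h2 : A.map (fun q : ℚ => (q:ℝ)) = (-1 : Matrix (Fin 2) (Fin 2) ℚ).map (fun q : ℚ => (q:ℝ)) := by
    rw [h]; ext i j; simp [Matrix.map_apply, Matrix.one_apply, apply_ite]
  exact Matrix.map_injective Rat.cast_injective h2

set_option maxHeartbeats 1000000 in
/-- If `A ∈ M₂(ℚ)` is conjugate in `GL(2, ℝ)` to an element of `SO(2)`, then
`A` has finite order if and only if `tr A ∈ ℤ`. -/
theorem finite_order_iff_trace_int (A : Matrix (Fin 2) (Fin 2) ℚ)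
    (hconj : ∃ P B : Matrix (Fin 2) (Fin 2) ℝ, IsUnit P.det ∧ Bᵀ * B = 1 ∧ B.det = 1 ∧
      A.map (fun q : ℚ => (q : ℝ)) = P * B * P⁻¹) :
    (∃ k : ℕ, 0 < k ∧ A ^ k = 1) ↔ (∃ m : ℤ, A.trace = (m : ℚ)) := by
  obtain ⟨P, B, hP, hBo, hBd, hmap⟩ := hconj
  -- determinant of A is 1
  have hdet : A.det = 1 := by
    have h1 : (A.map (fun q : ℚ => (q : ℝ))).det = ((A.det : ℝ)) := by
      simp [Matrix.det_fin_two, Matrix.map_apply]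
    have h2 : (P * B * P⁻¹).det = 1 := by
      rw [Matrix.det_mul, Matrix.det_mul, hBd, Matrix.det_nonsing_inv, Ring.inverse_eq_inv]
      rw [mul_one, mul_inv_cancel₀ (IsUnit.ne_zero hP)]
    have h3 := h1.symm.trans (by rw [hmap, h2])
    exact_mod_cast h3
  -- trace of A equals trace of B
  have htr : ((A.trace : ℝ)) = B.trace := by
    have h1 : (A.map (fun q : ℚ => (q : ℝ))).trace = ((A.trace : ℝ)) := by
      simp [Matrix.trace_fin_two, Matrix.map_apply]
    rw [← h1, hmap, Matrix.trace_mul_comm (P * B) P⁻¹, ← Matrix.mul_assoc,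
      Matrix.nonsing_inv_mul _ hP, Matrix.one_mul]
  have h00 := congrFun (congrFun hBo 0) 0
  have h11 := congrFun (congrFun hBo 1) 1
  simp [Matrix.mul_apply, Fin.sum_univ_two, Matrix.one_apply, Matrix.transpose_apply] at h00 h11
  constructor
  · rintro ⟨k, hk, hAk⟩
    exact trace_int_of_finite_order A hdet k hk hAk
  · rintro ⟨m, hm⟩
    -- |m| ≤ 2
    have hb2 : |B.trace| ≤ 2 := by
      rw [Matrix.trace_fin_two, abs_le]
      constructor <;> nlinarith [sq_nonneg (B 0 0 - 1), sq_nonneg (B 1 1 - 1),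
        sq_nonneg (B 0 0 + 1), sq_nonneg (B 1 1 + 1), sq_nonneg (B 1 0), sq_nonneg (B 0 1)]
    have hm2' : ((m:ℚ):ℝ) = B.trace := by rw [← hm]; exact htr
    have hm3 : -2 ≤ m ∧ m ≤ 2 := by
      rw [← hm2', abs_le] at hb2
      exact ⟨by exact_mod_cast hb2.1, by exact_mod_cast hb2.2⟩
    -- Cayley–Hamilton
    have hsq : A * A = A.trace • A - 1 := by
      rw [Matrix.det_fin_two] at hdet
      rw [Matrix.trace_fin_two]
      ext i j
      fin_cases i <;> fin_cases j <;>
        simp [Matrix.mul_apply, Fin.sum_univ_two, Matrix.one_apply] <;> nlinarith [hdet]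
    rw [hm] at hsq
    obtain ⟨h1, h2⟩ := hm3
    interval_cases m
    · -- m = -2 : B = -1, A = -1
      clear hsq hdet
      have hBt : B.trace = -2 := by rw [← htr, hm]; norm_num
      rw [Matrix.trace_fin_two] at hBt
      have e0 : B 0 0 = -1 := by nlinarith [sq_nonneg (B 0 0 + 1), sq_nonneg (B 1 1 + 1)]
      have e1 : B 1 1 = -1 := by linarith
      have e2 : B 1 0 = 0 := by nlinarith
      have e3 : B 0 1 = 0 := by nlinarith
      have hB1 : B = -1 := by
        ext i j; fin_cases i <;> fin_cases j <;> simp [Matrix.one_apply, e0, e1, e2, e3]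
      rw [hB1] at hmap
      have hA1 : A = -1 := by
        apply map_eq_neg_one_aux
        rw [hmap, Matrix.mul_neg, Matrix.mul_one, Matrix.neg_mul,
          Matrix.mul_nonsing_inv _ hP]
      exact ⟨2, by norm_num, by rw [hA1]; norm_num⟩
    · -- m = -1 : A^3 = 1
      refine ⟨3, by norm_num, ?_⟩
      have hsq' : A * A = -A - 1 := by rw [hsq]; push_cast; rw [neg_smul, one_smul]
      have : A ^ 3 = A ^ 2 * A := by rw [pow_succ]
      rw [this, pow_two, hsq', sub_mul, neg_mul, hsq', one_mul]
      abel
    · -- m = 0 : A^4 = 1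
      refine ⟨4, by norm_num, ?_⟩
      have hsq' : A * A = -1 := by rw [hsq]; push_cast; rw [zero_smul, zero_sub]
      have h2' : A ^ 2 = -1 := by rw [pow_two, hsq']
      rw [show (4:ℕ) = 2 * 2 from rfl, pow_mul, h2']
      norm_num
    · -- m = 1 : A^3 = -1, A^6 = 1
      refine ⟨6, by norm_num, ?_⟩
      have hsq' : A * A = A - 1 := by rw [hsq]; push_cast; rw [one_smul]
      have h3 : A ^ 3 = -1 := by
        have : A ^ 3 = A ^ 2 * A := by rw [pow_succ]
        rw [this, pow_two, hsq', sub_mul, one_mul, hsq']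
        abel
      rw [show (6:ℕ) = 3 * 2 from rfl, pow_mul, h3]
      norm_num
    · -- m = 2 : B = 1, A = 1
      clear hsq hdet
      have hBt : B.trace = 2 := by rw [← htr, hm]; norm_num
      rw [Matrix.trace_fin_two] at hBt
      have e0 : B 0 0 = 1 := by nlinarith [sq_nonneg (B 0 0 - 1), sq_nonneg (B 1 1 - 1)]
      have e1 : B 1 1 = 1 := by linarith
      have e2 : B 1 0 = 0 := by nlinarith
      have e3 : B 0 1 = 0 := by nlinarith
      have hB1 : B = 1 := by
        ext i j; fin_cases i <;> fin_cases j <;> simp [Matrix.one_apply, e0, e1, e2, e3]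
      rw [hB1] at hmap
      have hA1 : A = 1 := by
        apply map_eq_one_aux
        rw [hmap, Matrix.mul_one, Matrix.mul_nonsing_inv _ hP]
      exact ⟨1, by norm_num, by rw [hA1]; norm_num⟩
end

section
/- If a matrix A ∈ GL(n, Q) has finite multiplicative order, then its characteristic polynomial has integer coefficients. -/
open Matrix Polynomial

/-- If a matrix `A ∈ GL(n, ℚ)` has finite multiplicative order, then its
characteristic polynomial has integer coefficients. -/
theorem charpoly_int_of_finite_order (n : ℕ) (A : Matrix (Fin n) (Fin n) ℚ)
    (hA : IsUnit A.det) (hfin : ∃ k : ℕ, 0 < k ∧ A ^ k = 1) :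
    ∀ i : ℕ, ∃ m : ℤ, A.charpoly.coeff i = (m : ℚ) := by
  obtain ⟨k, hk, hAk⟩ := hfin
  intro i
  set K := AlgebraicClosure ℚ
  let f : ℚ →+* K := algebraMap ℚ K
  set B : Matrix (Fin n) (Fin n) K := A.map f with hB
  have hmap : B.charpoly = A.charpoly.map f := Matrix.charpoly_map A f
  have hBk : B ^ k = 1 := by
    have : B = f.mapMatrix A := rfl
    rw [this, ← _root_.map_pow, hAk, _root_.map_one]
  -- every root of the charpoly of B satisfies μ^k = 1, hence is integral over ℤ
  have hroots : ∀ μ ∈ B.charpoly.roots, IsIntegral ℤ μ := by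
    intro μ hμ
    have hroot : B.charpoly.IsRoot μ := isRoot_of_mem_roots hμ
    have hdet : (Matrix.scalar (Fin n) μ - B).det = 0 := by
      have := hroot
      rwa [Polynomial.IsRoot, Matrix.charpoly, _root_.eval_det,
        Matrix.matPolyEquiv_charmatrix, Polynomial.eval_sub, Polynomial.eval_X,
        Polynomial.eval_C] at this
    obtain ⟨v, hv0, hv⟩ := (Matrix.exists_mulVec_eq_zero_iff).2 hdet
    have hBv : B *ᵥ v = μ • v := by
      have h1 : (Matrix.scalar (Fin n) μ) *ᵥ v - B *ᵥ v = 0 := by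
        rw [← Matrix.sub_mulVec]; exact hv
      have h2 : (Matrix.scalar (Fin n) μ) *ᵥ v = μ • v := by
        ext j
        simp [Matrix.scalar_apply, Matrix.mulVec_diagonal]
      rw [h2] at h1
      exact (sub_eq_zero.1 h1).symm
    have hpow : ∀ m : ℕ, (B ^ m) *ᵥ v = μ ^ m • v := by
      intro m
      induction m with
      | zero => simp
      | succ m ih =>
          rw [pow_succ', ← Matrix.mulVec_mulVec, ih, Matrix.mulVec_smul, hBv,
            smul_smul, pow_succ, mul_comm]
    have hμk : μ ^ k = 1 := by
      have := hpow k
      rw [hBk, Matrix.one_mulVec] at this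
      have h3 : (μ ^ k - 1) • v = 0 := by
        rw [sub_smul, one_smul, ← this, sub_self]
      rcases smul_eq_zero.1 h3 with h | h
      · exact sub_eq_zero.1 h
      · exact absurd h hv0
    refine ⟨X ^ k - 1, ?_, ?_⟩
    · exact monic_X_pow_sub_C 1 hk.ne'
    · simp [hμk]
  -- the coefficients of B.charpoly are integral over ℤ
  have hcard : B.charpoly.natDegree = n := by
    rcases Nat.eq_zero_or_pos n with hn | hn
    · subst hn
      have : B.charpoly = 1 := by
        have := Matrix.charpoly_degree_eq_dim B
        simp only [Fintype.card_fin, Nat.cast_zero] at this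
        exact (Polynomial.eq_one_of_monic_natDegree_zero (Matrix.charpoly_monic B)
          (Polynomial.natDegree_eq_zero_iff_degree_le_zero.2 this.le))
      simp [this]
    · haveI : Nontrivial (Matrix (Fin n) (Fin n) K) := by
        have : Nonempty (Fin n) := ⟨⟨0, hn⟩⟩
        infer_instance
      rw [Matrix.charpoly_natDegree_eq_dim, Fintype.card_fin]
  have hint : IsIntegral ℤ (B.charpoly.coeff i) := by
    by_cases hi : i ≤ B.charpoly.natDegree
    · have hsplit : B.charpoly.Splits := IsAlgClosed.splits _
      rw [Polynomial.coeff_eq_esymm_roots_of_splits hsplit hi,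
        (Matrix.charpoly_monic B).leadingCoeff, one_mul]
      have hesymm : B.charpoly.roots.esymm (B.charpoly.natDegree - i) ∈
          integralClosure ℤ K := by
        rw [Multiset.esymm]
        refine Subalgebra.multiset_sum_mem _ ?_
        intro x hx
        simp only [Multiset.mem_map] at hx
        obtain ⟨t, ht, rfl⟩ := hx
        refine Subalgebra.multiset_prod_mem _ ?_
        intro y hy
        exact hroots y ((Multiset.mem_of_le (Multiset.mem_powersetCard.1 ht).1) hy)
      exact Subalgebra.mul_mem _ (Subalgebra.pow_mem _
        (Subalgebra.neg_mem _ (Subalgebra.one_mem _)) _) hesymm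
    · rw [Polynomial.coeff_eq_zero_of_natDegree_lt (lt_of_not_ge hi)]
      exact isIntegral_zero
  -- descend to ℚ and then to ℤ
  have hcoeff : f (A.charpoly.coeff i) = B.charpoly.coeff i := by
    rw [hmap, Polynomial.coeff_map]
  have hintQ : IsIntegral ℤ (A.charpoly.coeff i) := by
    rw [← isIntegral_algebraMap_iff (A := ℚ) (B := K)
      (algebraMap ℚ K).injective]
    exact hcoeff ▸ hint
  obtain ⟨m, hm⟩ := IsIntegrallyClosed.isIntegral_iff.1 hintQ
  exact ⟨m, hm.symm ▸ rfl⟩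
end

section
/- A matrix A ∈ GL(n, Q) is conjugate in GL(n, Q) to a matrix in GL(n, Z) if and only if det(A) = ±1 and all coefficients of the characteristic polynomial of A are integers. -/
open Matrix Polynomial

-- charpoly is invariant under conjugation
lemma charpoly_conj_aux {n : ℕ} (M D C : Matrix (Fin n) (Fin n) ℚ)
    (h1 : D * C = 1) : (D * M * C).charpoly = M.charpoly := by
  set f : Matrix (Fin n) (Fin n) ℚ →+* Matrix (Fin n) (Fin n) ℚ[X] :=
    (Polynomial.C : ℚ →+* ℚ[X]).mapMatrix with hf
  have h2 : f D * f C = 1 := by rw [← _root_.map_mul, h1, _root_.map_one]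
  have key : charmatrix (D * M * C) = f D * charmatrix M * f C := by
    rw [charmatrix, charmatrix, mul_sub, sub_mul]
    congr 1
    · rw [scalar_apply, ← smul_one_eq_diagonal, mul_smul_comm, smul_mul_assoc, mul_one, h2]
    · rw [← _root_.map_mul, ← _root_.map_mul]
  have h3 : (f D).det * (f C).det = 1 := by
    rw [← det_mul, h2, det_one]
  rw [Matrix.charpoly, Matrix.charpoly, key, det_mul, det_mul]
  calc (f D).det * (charmatrix M).det * (f C).det
      = (f D).det * (f C).det * (charmatrix M).det := by ring
    _ = (charmatrix M).det := by rw [h3, one_mul]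

/-- A matrix `A ∈ GL(n, ℚ)` is conjugate in `GL(n, ℚ)` to a matrix in
`GL(n, ℤ)` if and only if `det A = ±1` and all coefficients of the
characteristic polynomial of `A` are integers. -/
theorem conj_to_GLnZ_iff (n : ℕ) (A : Matrix (Fin n) (Fin n) ℚ) (hA : IsUnit A.det) :
    (∃ (C : Matrix (Fin n) (Fin n) ℚ) (B : Matrix (Fin n) (Fin n) ℤ),
        IsUnit C.det ∧ IsUnit B.det ∧ C⁻¹ * A * C = B.map (fun z : ℤ => (z : ℚ))) ↔
      ((A.det = 1 ∨ A.det = -1) ∧ ∀ i : ℕ, ∃ m : ℤ, A.charpoly.coeff i = (m : ℚ)) := by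
  constructor
  · rintro ⟨C, B, hC, hB, heq⟩
    have hCi : C⁻¹ * C = 1 := nonsing_inv_mul C hC
    have hCi' : C * C⁻¹ = 1 := mul_nonsing_inv C hC
    have hch : A.charpoly = (B.map (fun z : ℤ => (z : ℚ))).charpoly := by
      have : A = C * (C⁻¹ * A * C) * C⁻¹ := by
        rw [← mul_assoc, ← mul_assoc, hCi', one_mul, mul_assoc, hCi', mul_one]
      calc A.charpoly = (C * (C⁻¹ * A * C) * C⁻¹).charpoly := by rw [← this]
        _ = (C⁻¹ * A * C).charpoly := charpoly_conj_aux _ C C⁻¹ hCi'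
        _ = _ := by rw [heq]
    have hmap : (B.map (fun z : ℤ => (z : ℚ))) = B.map (Int.castRingHom ℚ) := rfl
    have hch2 : A.charpoly = B.charpoly.map (Int.castRingHom ℚ) := by
      rw [hch, hmap, charpoly_map]
    have hdet : A.det = ((B.det : ℤ) : ℚ) := by
      have h1 : (C⁻¹ * A * C).det = (B.map (fun z : ℤ => (z : ℚ))).det := by rw [heq]
      rw [det_mul, det_mul, hmap] at h1
      have hmd : ((B.det : ℤ) : ℚ) = (B.map ⇑(Int.castRingHom ℚ)).det :=
        (Int.castRingHom ℚ).map_det B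
      rw [← hmd] at h1
      have : C⁻¹.det * A.det * C.det = A.det * (C⁻¹.det * C.det) := by ring
      rw [this, ← det_mul, hCi, det_one, mul_one] at h1
      exact h1
    constructor
    · rcases Int.isUnit_iff.mp hB with h | h <;> [left; right] <;>
        rw [hdet, h] <;> norm_num
    · intro i
      exact ⟨B.charpoly.coeff i, by rw [hch2, Polynomial.coeff_map]; rfl⟩
  · rintro ⟨hdet, hcoeff⟩
    choose c hc using hcoeff
    classical
    -- the lattice
    set L : Submodule ℤ (Fin n → ℚ) :=
      Submodule.span ℤ (Set.range fun p : Fin n × Fin n =>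
        (A ^ (p.1 : ℕ)).mulVec (Pi.single p.2 1)) with hL
    have hgen : ∀ (k i : Fin n), (A ^ (k : ℕ)).mulVec (Pi.single i 1) ∈ L :=
      fun k i => Submodule.subset_span ⟨(k, i), rfl⟩
    -- Cayley-Hamilton: A ^ n is an integer combination of lower powers
    have hCH : A ^ n = ∑ k ∈ Finset.range n, (-(c k : ℚ)) • A ^ k := by
      have h0 := Matrix.aeval_self_charpoly A
      rw [Polynomial.aeval_eq_sum_range, Matrix.charpoly_natDegree_eq_dim,
        Fintype.card_fin, Finset.sum_range_succ] at h0
      have hn : A.charpoly.coeff n = 1 := by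
        have hm := A.charpoly_monic
        have hd := A.charpoly_natDegree_eq_dim
        have : A.charpoly.coeff n = A.charpoly.leadingCoeff := by
          rw [Polynomial.leadingCoeff, hd, Fintype.card_fin]
        rw [this]; exact hm
      rw [hn, one_smul] at h0
      have h0' : A ^ n = -∑ k ∈ Finset.range n, A.charpoly.coeff k • A ^ k :=
        eq_neg_of_add_eq_zero_right h0
      rw [h0', ← Finset.sum_neg_distrib]
      exact Finset.sum_congr rfl fun k _ => by rw [hc k, neg_smul]
    -- L is invariant under A
    have hinv : ∀ x ∈ L, A.mulVec x ∈ L := by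
      intro x hx
      induction hx using Submodule.span_induction with
      | mem y hy =>
          obtain ⟨⟨k, i⟩, rfl⟩ := hy
          have hstep : A.mulVec ((A ^ (k : ℕ)).mulVec (Pi.single i 1))
              = (A ^ ((k : ℕ) + 1)).mulVec (Pi.single i 1) := by
            rw [Matrix.mulVec_mulVec, ← pow_succ']
          rw [hstep]
          rcases lt_or_eq_of_le (Nat.succ_le_of_lt k.isLt) with h | h
          · have := hgen ⟨(k : ℕ) + 1, h⟩ i
            simpa using this
          · rw [show (k : ℕ) + 1 = n from h, hCH]
            have hgensum : ∀ (s : Finset ℕ) (f : ℕ → Matrix (Fin n) (Fin n) ℚ)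
                (v : Fin n → ℚ), (∑ m ∈ s, f m) *ᵥ v = ∑ m ∈ s, f m *ᵥ v := by
              intro s f v
              induction s using Finset.cons_induction with
              | empty => simp [Matrix.zero_mulVec]
              | cons a s ha ih =>
                  rw [Finset.sum_cons, Finset.sum_cons, Matrix.add_mulVec, ih]
            have hsum : (∑ m ∈ Finset.range n, (-(c m : ℚ)) • A ^ m).mulVec (Pi.single i 1)
                = ∑ m ∈ Finset.range n, (-(c m : ℚ)) • ((A ^ m).mulVec (Pi.single i 1)) := by
              rw [hgensum]
              exact Finset.sum_congr rfl fun m _ => Matrix.smul_mulVec _ _ _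
            rw [hsum]
            refine Submodule.sum_mem _ fun m hm => ?_
            have hz : (-(c m : ℚ)) • ((A ^ m).mulVec (Pi.single i 1))
                = (-(c m)) • ((A ^ m).mulVec (Pi.single i 1)) := by
              rw [← Int.cast_smul_eq_zsmul ℚ]
              push_cast
              ring_nf
            rw [hz]
            refine Submodule.smul_mem _ _ ?_
            have := hgen ⟨m, Finset.mem_range.mp hm⟩ i
            simpa using this
      | zero => simpa using Submodule.zero_mem L
      | add y z _ _ hy hz =>
          rw [Matrix.mulVec_add]; exact Submodule.add_mem _ hy hz
      | smul r y _ hy =>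
          rw [Matrix.mulVec_smul]; exact Submodule.smul_mem _ _ hy
    -- standard basis vectors lie in L
    have he : ∀ i : Fin n, Pi.single i 1 ∈ L := by
      intro i
      have h01 : (A ^ (((⟨0, i.pos⟩ : Fin n)) : ℕ)) *ᵥ Pi.single i 1 = Pi.single i 1 := by
        show (A ^ (0 : ℕ)) *ᵥ Pi.single i 1 = Pi.single i 1
        rw [pow_zero, Matrix.one_mulVec]
      exact h01 ▸ hgen ⟨0, i.pos⟩ i
    -- L is finite free over ℤ
    have hFG : L.FG := Submodule.fg_span (Set.finite_range _)
    haveI hfin : Module.Finite ℤ L := Module.Finite.iff_fg.mpr hFG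
    haveI hfree : Module.Free ℤ L := Module.free_of_finite_type_torsion_free'
    -- the standard ℚ-basis, restricted to ℤ-linear independence
    have hstdli : LinearIndependent ℤ (fun i : Fin n => (Pi.single i 1 : Fin n → ℚ)) := by
      have hℚ : LinearIndependent ℚ (fun i : Fin n => (Pi.single i 1 : Fin n → ℚ)) := by
        have := (Pi.basisFun ℚ (Fin n)).linearIndependent
        simpa [funext fun i => Pi.basisFun_apply ℚ (Fin n) i] using this
      exact hℚ.restrict_scalars (by
        intro x y h
        simpa using h)
    -- finrank ℤ L = n
    have hrank : Module.finrank ℤ L = n := by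
      apply le_antisymm
      · set b0 := Module.Free.chooseBasis ℤ L with hb0
        have hli : LinearIndependent ℤ (fun i => ((b0 i : L) : Fin n → ℚ)) := by
          exact b0.linearIndependent.map' L.subtype (Submodule.ker_subtype L)
        have hliℚ : LinearIndependent ℚ (fun i => ((b0 i : L) : Fin n → ℚ)) :=
          hli.localization ℚ (nonZeroDivisors ℤ)
        calc Module.finrank ℤ L
            = Fintype.card (Module.Free.ChooseBasisIndex ℤ L) :=
              Module.finrank_eq_card_chooseBasisIndex ℤ L
          _ ≤ Module.finrank ℚ (Fin n → ℚ) := hliℚ.fintype_card_le_finrank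
          _ = n := by simp
      · have hli : LinearIndependent ℤ (fun i : Fin n => (⟨Pi.single i 1, he i⟩ : L)) := by
          apply LinearIndependent.of_comp L.subtype
          exact hstdli
        have := hli.fintype_card_le_finrank
        simpa using this
    -- a ℤ-basis of L indexed by Fin n
    let e : Module.Free.ChooseBasisIndex ℤ L ≃ Fin n :=
      Fintype.equivFinOfCardEq (by
        rw [← Module.finrank_eq_card_chooseBasisIndex, hrank])
    let b : Module.Basis (Fin n) ℤ L := (Module.Free.chooseBasis ℤ L).reindex e
    -- the change of basis matrix
    let C : Matrix (Fin n) (Fin n) ℚ := Matrix.of fun i j => ((b j : L) : Fin n → ℚ) i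
    have hbliℚ : LinearIndependent ℚ (fun j => ((b j : L) : Fin n → ℚ)) := by
      have hli : LinearIndependent ℤ (fun j => ((b j : L) : Fin n → ℚ)) :=
        b.linearIndependent.map' L.subtype (Submodule.ker_subtype L)
      exact hli.localization ℚ (nonZeroDivisors ℤ)
    have hCunit : IsUnit C := by
      have hli : LinearIndependent ℚ (fun j => Cᵀ j) := by
        convert hbliℚ using 2
        rfl
      exact Matrix.linearIndependent_cols_iff_isUnit.mp hli
    have hCdet : IsUnit C.det := (Matrix.isUnit_iff_isUnit_det C).mp hCunit
    -- the integer matrix of A with respect to b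
    let B : Matrix (Fin n) (Fin n) ℤ := Matrix.of fun i j =>
      b.repr ⟨A.mulVec ((b j : L) : Fin n → ℚ), hinv _ (b j).2⟩ i
    -- the key intertwining identity
    have hkey : A * C = C * B.map (fun z : ℤ => (z : ℚ)) := by
      ext i j
      have h1 : (A * C) i j = (A.mulVec ((b j : L) : Fin n → ℚ)) i := by
        simp [Matrix.mul_apply, Matrix.mulVec, dotProduct, C]
      set x : L := ⟨A.mulVec ((b j : L) : Fin n → ℚ), hinv _ (b j).2⟩ with hx
      have h2 : (x : Fin n → ℚ) = ∑ k, (b.repr x k : ℚ) • ((b k : L) : Fin n → ℚ) := by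
        conv_lhs => rw [← b.sum_repr x]
        rw [Submodule.coe_sum]
        exact Finset.sum_congr rfl fun k _ => by
          rw [Submodule.coe_smul, Int.cast_smul_eq_zsmul]
      have h3 : A.mulVec ((b j : L) : Fin n → ℚ) = (x : Fin n → ℚ) := rfl
      rw [h1, h3, h2]
      simp [Matrix.mul_apply, Matrix.map_apply, C, B, Finset.sum_apply, mul_comm]
      rfl
    have heq : C⁻¹ * A * C = B.map (fun z : ℤ => (z : ℚ)) := by
      rw [mul_assoc, hkey, ← mul_assoc, Matrix.nonsing_inv_mul C hCdet, one_mul]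
    -- B has unit determinant
    have hBdet : IsUnit B.det := by
      have hdetB : ((B.det : ℤ) : ℚ) = A.det := by
        have h2 : ((B.det : ℤ) : ℚ) = (B.map (fun z : ℤ => (z : ℚ))).det :=
          (Int.castRingHom ℚ).map_det B
        have h1 : C.det * A.det = C.det * ((B.det : ℤ) : ℚ) := by
          rw [h2]
          calc C.det * A.det = A.det * C.det := mul_comm _ _
            _ = (A * C).det := (det_mul _ _).symm
            _ = (C * B.map (fun z : ℤ => (z : ℚ))).det := by rw [hkey]
            _ = C.det * (B.map (fun z : ℤ => (z : ℚ))).det := det_mul _ _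
        exact (mul_left_cancel₀ hCdet.ne_zero h1).symm
      rw [Int.isUnit_iff]
      rcases hdet with h | h
      · left; exact_mod_cast hdetB.trans h
      · right; exact_mod_cast hdetB.trans h
    exact ⟨C, B, hCdet, hBdet, heq⟩
end

section
/- Let A ∈ GL(n, Q) and suppose there exists C ∈ GL(n, Q) with C⁻¹AC ∈ GL(n, Z). Then there exists a finite-index subgroup M of L = Z^n, contained in any prescribed finite-index subgroup L' ≤ L with A·L' ⊆ L, such that A·M = M. -/
open Matrix

/-- The standard integer lattice `ℤⁿ ⊆ ℚⁿ`. -/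
def intLattice (n : ℕ) : AddSubgroup (Fin n → ℚ) where
  carrier := {v | ∀ i, ∃ m : ℤ, v i = (m : ℚ)}
  zero_mem' := fun i => ⟨0, by simp⟩
  add_mem' := by
    rintro a b ha hb i
    obtain ⟨m, hm⟩ := ha i; obtain ⟨m', hm'⟩ := hb i
    exact ⟨m + m', by simp [hm, hm']⟩
  neg_mem' := by
    rintro a ha i
    obtain ⟨m, hm⟩ := ha i
    exact ⟨-m, by simp [hm]⟩

lemma mem_intLattice_iff {n : ℕ} {v : Fin n → ℚ} :
    v ∈ intLattice n ↔ ∃ u : Fin n → ℤ, v = fun i => (u i : ℚ) := by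
  constructor
  · intro h; choose u hu using h; exact ⟨u, funext hu⟩
  · rintro ⟨u, rfl⟩ i; exact ⟨u i, rfl⟩

lemma intMat_mulVec_mem {n : ℕ} (P : Matrix (Fin n) (Fin n) ℤ) {v : Fin n → ℚ}
    (hv : v ∈ intLattice n) :
    (P.map (fun z : ℤ => (z : ℚ))).mulVec v ∈ intLattice n := by
  obtain ⟨u, rfl⟩ := mem_intLattice_iff.mp hv
  refine mem_intLattice_iff.mpr ⟨P.mulVec u, funext fun i => ?_⟩
  simp only [Matrix.mulVec, dotProduct, Matrix.map_apply]
  push_cast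
  rfl

lemma rat_den_dvd_int {q : ℚ} {d : ℕ} (h : q.den ∣ d) : ∃ m : ℤ, (d : ℚ) * q = (m : ℚ) := by
  obtain ⟨e, he⟩ := h
  have h1 : (q.den : ℚ) * q = q.num := by
    have hne : (q.den : ℚ) ≠ 0 := by exact_mod_cast q.den_nz
    rw [mul_comm]
    exact (eq_div_iff hne).mp (Rat.num_div_den q).symm
  refine ⟨q.num * e, ?_⟩
  subst he
  push_cast
  calc ((q.den : ℚ) * e) * q = ((q.den : ℚ) * q) * e := by ring
    _ = (q.num : ℚ) * e := by rw [h1]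

lemma exists_denom_matrix {n : ℕ} (Q : Matrix (Fin n) (Fin n) ℚ) :
    ∃ (d : ℕ) (P : Matrix (Fin n) (Fin n) ℤ), 0 < d ∧
      (d : ℚ) • Q = P.map (fun z : ℤ => (z : ℚ)) := by
  classical
  set d := ∏ p : Fin n × Fin n, (Q p.1 p.2).den with hd
  have hpos : 0 < d := Finset.prod_pos (fun p _ => (Q p.1 p.2).pos)
  have hdvd : ∀ i j, (Q i j).den ∣ d := fun i j =>
    Finset.dvd_prod_of_mem _ (Finset.mem_univ ((i, j) : Fin n × Fin n))
  choose P hP using fun i j => rat_den_dvd_int (hdvd i j)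
  refine ⟨d, Matrix.of P, hpos, ?_⟩
  ext i j
  simpa [Matrix.map_apply, smul_eq_mul] using hP i j

/-- If `A ∈ GL(n, ℚ)` is conjugate in `GL(n, ℚ)` to a matrix in `GL(n, ℤ)`,
then inside any prescribed finite-index subgroup `L' ≤ L = ℤⁿ` with
`A·L' ⊆ L` there is a finite-index subgroup `M` of `L` with `A·M = M`. -/
theorem exists_invariant_finite_index_sublattice (n : ℕ)
    (A : Matrix (Fin n) (Fin n) ℚ) (hA : IsUnit A.det)
    (hconj : ∃ (C : Matrix (Fin n) (Fin n) ℚ) (B : Matrix (Fin n) (Fin n) ℤ),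
      IsUnit C.det ∧ IsUnit B.det ∧ C⁻¹ * A * C = B.map (fun z : ℤ => (z : ℚ)))
    (L' : AddSubgroup (Fin n → ℚ)) (hL' : L' ≤ intLattice n)
    (hfi : (L'.addSubgroupOf (intLattice n)).index ≠ 0)
    (hAL' : ∀ v ∈ L', A.mulVec v ∈ intLattice n) :
    ∃ M : AddSubgroup (Fin n → ℚ), M ≤ L' ∧
      (M.addSubgroupOf (intLattice n)).index ≠ 0 ∧
      (fun v => A.mulVec v) '' (M : Set (Fin n → ℚ)) = (M : Set (Fin n → ℚ)) := by
  classical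
  obtain ⟨C, B, hC, hB, hCB⟩ := hconj
  set Bq := B.map (fun z : ℤ => (z : ℚ)) with hBq
  have hAC : A * C = C * Bq := by
    calc A * C = (C * C⁻¹) * (A * C) := by rw [Matrix.mul_nonsing_inv C hC, one_mul]
      _ = C * (C⁻¹ * A * C) := by simp only [Matrix.mul_assoc]
      _ = C * Bq := by rw [hCB]
  obtain ⟨d, Cd, hdpos, hCd⟩ := exists_denom_matrix C
  obtain ⟨e, Ce, hepos, hCe⟩ := exists_denom_matrix C⁻¹
  set k := (L'.addSubgroupOf (intLattice n)).index with hk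
  have hkmem : ∀ x : Fin n → ℚ, x ∈ intLattice n → (k : ℚ) • x ∈ L' := by
    intro x hx
    have h0 := AddSubgroup.nsmul_index_mem (L'.addSubgroupOf (intLattice n))
      (⟨x, hx⟩ : intLattice n)
    rw [AddSubgroup.mem_addSubgroupOf] at h0
    have h2 : ((k • (⟨x, hx⟩ : intLattice n) : intLattice n) : Fin n → ℚ) = k • x := rfl
    rw [h2] at h0
    rw [Nat.cast_smul_eq_nsmul]
    exact h0
  set D := (((k * d : ℕ)) : ℚ) • C with hD
  set f : (Fin n → ℚ) →+ (Fin n → ℚ) :=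
    AddMonoidHom.mk' (fun v => D.mulVec v) (fun x y => Matrix.mulVec_add D x y) with hf
  set M := AddSubgroup.map f (intLattice n) with hM
  have hmemM : ∀ w, w ∈ M ↔ ∃ v ∈ intLattice n, D.mulVec v = w := by
    intro w
    simp [hM, AddSubgroup.mem_map, hf]
  have hDsplit : ∀ v, D.mulVec v = (k : ℚ) • ((Cd.map (fun z : ℤ => (z : ℚ))).mulVec v) := by
    intro v
    rw [← hCd, hD]
    have h3 : (((k * d : ℕ)) : ℚ) • C = (k : ℚ) • ((d : ℚ) • C) := by
      rw [smul_smul]; push_cast; ring_nf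
    rw [h3, Matrix.smul_mulVec]
  -- M ≤ L'
  have hML' : M ≤ L' := by
    intro w hw
    obtain ⟨v, hv, rfl⟩ := (hmemM w).mp hw
    rw [hDsplit]
    exact hkmem _ (intMat_mulVec_mem Cd hv)
  -- N-scaled lattice is in M
  set N : ℕ := k * d * e with hN
  have hNne : N ≠ 0 := by
    have : k ≠ 0 := hfi
    positivity
  have hNmem : ∀ v ∈ intLattice n, ((N : ℕ) : ℚ) • v ∈ M := by
    intro v hv
    refine (hmemM _).mpr ⟨(Ce.map (fun z : ℤ => (z : ℚ))).mulVec v,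
      intMat_mulVec_mem Ce hv, ?_⟩
    rw [Matrix.mulVec_mulVec, ← hCe]
    have h4 : D * ((e : ℚ) • C⁻¹) = ((N : ℕ) : ℚ) • (1 : Matrix (Fin n) (Fin n) ℚ) := by
      rw [hD, Matrix.smul_mul, Matrix.mul_smul, Matrix.mul_nonsing_inv C hC, smul_smul]
      congr 1
      push_cast [hN]
      ring
    rw [h4, Matrix.smul_mulVec, Matrix.one_mulVec]
  -- invariance
  have hAD : A * D = D * Bq := by
    rw [hD, Matrix.mul_smul, Matrix.smul_mul, hAC]
  have hBB : Bq * (B⁻¹.map (fun z : ℤ => (z : ℚ))) = 1 := by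
    have h5 := Matrix.map_mul (L := B) (M := B⁻¹) (f := Int.castRingHom ℚ)
    rw [Matrix.mul_nonsing_inv B hB] at h5
    have h6 : (1 : Matrix (Fin n) (Fin n) ℤ).map (Int.castRingHom ℚ) = 1 := by
      simp
    rw [h6] at h5
    exact h5.symm
  have himg : (fun v => A.mulVec v) '' (M : Set (Fin n → ℚ)) = (M : Set (Fin n → ℚ)) := by
    apply Set.Subset.antisymm
    · rintro _ ⟨w, hw, rfl⟩
      obtain ⟨v, hv, rfl⟩ := (hmemM w).mp hw
      show A.mulVec (D.mulVec v) ∈ M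
      rw [Matrix.mulVec_mulVec, hAD, ← Matrix.mulVec_mulVec]
      exact (hmemM _).mpr ⟨Bq.mulVec v, intMat_mulVec_mem B hv, rfl⟩
    · intro w hw
      obtain ⟨v, hv, rfl⟩ := (hmemM w).mp hw
      refine ⟨D.mulVec ((B⁻¹.map (fun z : ℤ => (z : ℚ))).mulVec v), ?_, ?_⟩
      · exact (hmemM _).mpr ⟨_, intMat_mulVec_mem B⁻¹ hv, rfl⟩
      · show A.mulVec _ = D.mulVec v
        rw [Matrix.mulVec_mulVec, Matrix.mulVec_mulVec, hAD, Matrix.mul_assoc, hBB, mul_one]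
  -- finite index
  haveI : NeZero N := ⟨hNne⟩
  set φ : (intLattice n) →+ (Fin n → ZMod N) :=
    AddMonoidHom.mk' (fun x => fun i => ((((x : Fin n → ℚ)) i).num : ZMod N)) (by
      intro x y
      funext i
      obtain ⟨a, ha⟩ := x.2 i
      obtain ⟨b, hb⟩ := y.2 i
      show ((((x : Fin n → ℚ) + (y : Fin n → ℚ)) i).num : ZMod N)
        = (((x : Fin n → ℚ) i).num : ZMod N) + (((y : Fin n → ℚ) i).num : ZMod N)
      rw [Pi.add_apply, ha, hb, ← Int.cast_add, Rat.num_intCast, Rat.num_intCast,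
        Rat.num_intCast, Int.cast_add]) with hφ
  have hker : φ.ker ≤ M.addSubgroupOf (intLattice n) := by
    intro x hx
    rw [AddSubgroup.mem_addSubgroupOf]
    have hx' : ∀ i, ((N : ℤ)) ∣ (((x : Fin n → ℚ)) i).num := by
      intro i
      have h7 := congrFun (AddMonoidHom.mem_ker.mp hx) i
      exact (ZMod.intCast_zmod_eq_zero_iff_dvd _ N).mp h7
    choose c hc using hx'
    have hcl : (fun i => ((c i : ℤ) : ℚ)) ∈ intLattice n := mem_intLattice_iff.mpr ⟨c, rfl⟩
    have hxeq : (x : Fin n → ℚ) = ((N : ℕ) : ℚ) • (fun i => ((c i : ℤ) : ℚ)) := by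
      funext i
      obtain ⟨m, hm⟩ := x.2 i
      have hnum : (((x : Fin n → ℚ)) i).num = m := by rw [hm, Rat.num_intCast]
      have h8 : m = (N : ℤ) * c i := by rw [← hnum, hc i]
      rw [hm, h8, Pi.smul_apply, smul_eq_mul]
      push_cast
      ring
    rw [hxeq]
    exact hNmem _ hcl
  have hidx : (M.addSubgroupOf (intLattice n)).index ≠ 0 := by
    have h1 : (M.addSubgroupOf (intLattice n)).index ∣ φ.ker.index :=
      AddSubgroup.index_dvd_of_le hker
    have h2 : φ.ker.index ≠ 0 := by
      rw [AddSubgroup.index_ker]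
      exact Nat.card_pos.ne'
    intro h
    exact h2 (eq_zero_of_zero_dvd (h ▸ h1))
  exact ⟨M, hML', hidx, himg⟩
end

section
/- Conversely, if A ∈ GL(n, Q) and there exists a finite-index subgroup M ≤ Z^n with A·M = M, then A is conjugate in GL(n, Q) to a matrix in GL(n, Z). -/
open Matrix

noncomputable section AuxConj

variable (n : ℕ)

/-- cast map ℤ^n → ℚ^n as ℤ-linear map -/
def castLin : (Fin n → ℤ) →ₗ[ℤ] (Fin n → ℚ) where
  toFun v := fun i => (v i : ℚ)
  map_add' a b := by funext i; simp
  map_smul' c a := by funext i; simp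

lemma castLin_injective : Function.Injective (castLin n) := by
  intro a b h
  funext i
  have : ((a i : ℚ)) = (b i : ℚ) := congrFun h i
  exact_mod_cast this

lemma castLin_range : LinearMap.range (castLin n) =
    AddSubgroup.toIntSubmodule (intLattice n) := by
  ext v
  constructor
  · rintro ⟨w, rfl⟩ i
    exact ⟨w i, rfl⟩
  · intro hv
    choose m hm using hv
    exact ⟨m, by funext i; exact (hm i).symm⟩

/-- a ℤ-basis of the lattice -/
def latticeBasis : Module.Basis (Fin n) ℤ (AddSubgroup.toIntSubmodule (intLattice n)) :=
  (Pi.basisFun ℤ (Fin n)).map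
    ((LinearEquiv.ofInjective (castLin n) (castLin_injective n)).trans
      (LinearEquiv.ofEq _ _ (castLin_range n)))

end AuxConj

/-- If `A ∈ GL(n, ℚ)` stabilizes a finite-index subgroup `M ≤ ℤⁿ`
(`A·M = M`), then `A` is conjugate in `GL(n, ℚ)` to a matrix in `GL(n, ℤ)`. -/
theorem conj_to_GLnZ_of_invariant_sublattice (n : ℕ)
    (A : Matrix (Fin n) (Fin n) ℚ) (hA : IsUnit A.det)
    (M : AddSubgroup (Fin n → ℚ)) (hM : M ≤ intLattice n)
    (hfi : (M.addSubgroupOf (intLattice n)).index ≠ 0)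
    (hinv : (fun v => A.mulVec v) '' (M : Set (Fin n → ℚ)) = (M : Set (Fin n → ℚ))) :
    ∃ (C : Matrix (Fin n) (Fin n) ℚ) (B : Matrix (Fin n) (Fin n) ℤ),
      IsUnit C.det ∧ IsUnit B.det ∧ C⁻¹ * A * C = B.map (fun z : ℤ => (z : ℚ)) := by
  classical
  set L : Submodule ℤ (Fin n → ℚ) := AddSubgroup.toIntSubmodule (intLattice n) with hLdef
  set M' : Submodule ℤ (Fin n → ℚ) := AddSubgroup.toIntSubmodule M with hM'def
  have hML : M' ≤ L := hM
  set N : Submodule ℤ L := M'.comap L.subtype with hNdef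
  obtain ⟨k, bN⟩ := Submodule.basisOfPid (latticeBasis n) N
  -- the vectors of bN, inside ℚ^n
  set v : Fin k → (Fin n → ℚ) := fun j => ((bN j : L) : Fin n → ℚ) with hvdef
  have hv_indep_Z : LinearIndependent ℤ v := by
    have hveq : v = (L.subtype.comp N.subtype) ∘ bN := rfl
    rw [hveq]
    exact bN.linearIndependent.map' _ (by
      rw [LinearMap.ker_eq_bot]
      exact L.injective_subtype.comp N.injective_subtype)
  have hv_indep : LinearIndependent ℚ v :=
    (LinearIndependent.iff_fractionRing (R := ℤ) (K := ℚ)).mp hv_indep_Z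
  -- span of v over ℤ is M'
  have hv_span_Z : Submodule.span ℤ (Set.range v) = M' := by
    have hveq : Set.range v = (L.subtype ∘ N.subtype) '' Set.range ⇑bN := by
      rw [← Set.range_comp]; rfl
    rw [hveq, Set.image_comp, Submodule.span_image, Submodule.span_image, bN.span_eq,
      Submodule.map_top, Submodule.range_subtype, hNdef,
      Submodule.map_comap_eq, Submodule.range_subtype, inf_eq_right.mpr hML]
  -- span of v over ℚ is everything
  have hv_span : Submodule.span ℚ (Set.range v) = ⊤ := by
    rw [eq_top_iff]
    intro x _
    have hMspan : (M' : Set (Fin n → ℚ)) ⊆ (Submodule.span ℚ (Set.range v) : Set _) := by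
      rw [← hv_span_Z]
      exact Submodule.span_subset_span ℤ ℚ _
    have key : ∀ y : Fin n → ℚ, y ∈ intLattice n → y ∈ Submodule.span ℚ (Set.range v) := by
      intro y hy
      obtain ⟨m, hm0, -, hmem⟩ :=
        AddSubgroup.exists_nsmul_mem_of_index_ne_zero hfi ⟨y, hy⟩
      rw [AddSubgroup.mem_addSubgroupOf] at hmem
      have hmem' : m • y ∈ M' := hmem
      have hmne : (m : ℚ) ≠ 0 := by exact_mod_cast hm0.ne'
      have h1 : ((m : ℚ)) • y ∈ Submodule.span ℚ (Set.range v) := by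
        have : ((m : ℚ)) • y = m • y := Nat.cast_smul_eq_nsmul ℚ m y
        rw [this]
        exact hMspan hmem'
      have h2 : ((m : ℚ)⁻¹) • (((m : ℚ)) • y) ∈ Submodule.span ℚ (Set.range v) :=
        Submodule.smul_mem _ _ h1
      rwa [smul_smul, inv_mul_cancel₀ hmne, one_smul] at h2
    have hx : x ∈ Submodule.span ℚ (Set.range (Pi.basisFun ℚ (Fin n))) := by
      rw [(Pi.basisFun ℚ (Fin n)).span_eq]; trivial
    refine Submodule.span_le.mpr ?_ hx
    rintro - ⟨i, rfl⟩
    refine key _ ?_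
    intro j
    by_cases h : j = i
    · exact ⟨1, by simp [h, Pi.basisFun_apply]⟩
    · exact ⟨0, by simp [h, Pi.basisFun_apply]⟩
  -- k = n
  have hkn : k = n := by
    let bQ0 : Module.Basis (Fin k) ℚ (Fin n → ℚ) := Module.Basis.mk hv_indep hv_span.ge
    have h1 : Module.finrank ℚ (Fin n → ℚ) = k := by
      simpa using Module.finrank_eq_card_basis bQ0
    have h2 : Module.finrank ℚ (Fin n → ℚ) = n := by simp
    rw [← h1, h2]
  subst hkn
  -- the ℚ-basis of ℚ^n consisting of the vectors v
  let bQ : Module.Basis (Fin k) ℚ _ := Module.Basis.mk hv_indep hv_span.ge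
  have hbQ : ∀ j, bQ j = v j := fun j => Module.Basis.mk_apply _ _ j
  -- the corresponding ℤ-basis of M'
  let eMN := Submodule.comapSubtypeEquivOfLe hML
  let bM' : Module.Basis (Fin k) ℤ M' := bN.map eMN
  have hbM' : ∀ j, ((bM' j : Fin k → ℚ)) = v j := fun j => by
    simp only [bM', Module.Basis.map_apply]
    exact Submodule.comapSubtypeEquivOfLe_apply_coe hML (bN j)
  -- A maps M' to itself
  have hmemM : ∀ x : (Fin k → ℚ), x ∈ M' → A.mulVec x ∈ M' := by
    intro x hx
    have hx' : A.mulVec x ∈ (fun w => A.mulVec w) '' (M : Set _) := ⟨x, hx, rfl⟩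
    rw [hinv] at hx'
    exact hx'
  let φ : M' →ₗ[ℤ] M' := ((A.mulVecLin).restrictScalars ℤ).restrict
    (fun x hx => hmemM x hx)
  have hφcoe : ∀ x : M', ((φ x : Fin k → ℚ)) = A.mulVec (x : Fin k → ℚ) := fun x => rfl
  have hφ : Function.Bijective φ := by
    constructor
    · intro x y hxy
      have h1 : A.mulVec (x : Fin k → ℚ) = A.mulVec (y : Fin k → ℚ) := by
        rw [← hφcoe, ← hφcoe, hxy]
      apply Subtype.ext
      have h2 := congrArg (fun w => A⁻¹.mulVec w) h1
      simpa [Matrix.mulVec_mulVec, Matrix.nonsing_inv_mul A hA] using h2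
    · intro y
      have hy : (y : Fin k → ℚ) ∈ (fun w => A.mulVec w) '' (M : Set _) := by
        rw [hinv]; exact y.2
      obtain ⟨x, hx, hxy⟩ := hy
      exact ⟨⟨x, hx⟩, Subtype.ext hxy⟩
  let φe := LinearEquiv.ofBijective φ hφ
  let B : Matrix (Fin k) (Fin k) ℤ := LinearMap.toMatrix bM' bM' φ
  have hBdet : IsUnit B.det := by
    have h := LinearEquiv.isUnit_det φe bM' bM'
    have : (φe : M' →ₗ[ℤ] M') = φ := rfl
    rwa [this] at h
  let C : Matrix (Fin k) (Fin k) ℚ := (Pi.basisFun ℚ (Fin k)).toMatrix ⇑bQ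
  have hCdet : IsUnit C.det := by
    have h := (Pi.basisFun ℚ (Fin k)).isUnit_det bQ
    rwa [Module.Basis.det_apply] at h
  refine ⟨C, B, hCdet, hBdet, ?_⟩
  -- the key column identity
  have hcol : ∀ j, A.mulVec (v j) = fun i => ∑ l, (B l j : ℚ) * v l i := by
    intro j
    have h2 : (∑ l, B l j • bM' l) = φ (bM' j) := by
      simp_rw [B, LinearMap.toMatrix_apply]
      exact bM'.sum_repr _
    have h3 : A.mulVec (v j) = ((∑ l, B l j • bM' l : M') : Fin k → ℚ) := by
      rw [h2, hφcoe, hbM']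
    rw [h3]
    funext i
    push_cast
    simp [Finset.sum_apply, hbM', zsmul_eq_mul]
  have key : A * C = C * B.map (fun z : ℤ => (z : ℚ)) := by
    ext i j
    have hC : ∀ a b, C a b = v b a := fun a b => by
      simp [C, Module.Basis.toMatrix_apply, Pi.basisFun_repr, hbQ]
    have h4 := congrFun (hcol j) i
    simp only [Matrix.mulVec, dotProduct] at h4
    rw [Matrix.mul_apply, Matrix.mul_apply]
    calc ∑ l, A i l * C l j = ∑ l, A i l * v j l := by simp [hC]
      _ = ∑ l, (B l j : ℚ) * v l i := h4
      _ = ∑ l, C i l * (B.map (fun z : ℤ => (z : ℚ))) l j := by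
          refine Finset.sum_congr rfl fun l _ => ?_
          rw [hC, Matrix.map_apply, mul_comm]
  calc C⁻¹ * A * C = C⁻¹ * (A * C) := by rw [Matrix.mul_assoc]
    _ = C⁻¹ * (C * B.map (fun z : ℤ => (z : ℚ))) := by rw [key]
    _ = (C⁻¹ * C) * B.map (fun z : ℤ => (z : ℚ)) := by rw [Matrix.mul_assoc]
    _ = B.map (fun z : ℤ => (z : ℚ)) := by
        rw [Matrix.nonsing_inv_mul C hCdet, Matrix.one_mul]
end

section
/- If both L' and L'' = A·L' are proper subgroups of L, then L is self-centralizing in G = G(A, L'), i.e., the centralizer of L in G equals L. -/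
open Matrix

open Subgroup HNNExtension HNNExtension.NormalWord

/-- In any group, if `A` and `B` are proper subgroups, there is an element
outside both. -/
theorem exists_not_mem_union {G : Type*} [Group G] {A B : Subgroup G}
    (hA : A ≠ ⊤) (hB : B ≠ ⊤) : ∃ c : G, c ∉ A ∧ c ∉ B := by
  obtain ⟨a, ha⟩ : ∃ a, a ∉ A := by
    by_contra h; push_neg at h; exact hA ((Subgroup.eq_top_iff' A).2 h)
  obtain ⟨b, hb⟩ : ∃ b, b ∉ B := by
    by_contra h; push_neg at h; exact hB ((Subgroup.eq_top_iff' B).2 h)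
  by_cases haB : a ∈ B
  · by_cases hbA : b ∈ A
    · refine ⟨a * b, fun h => ha ?_, fun h => hb ?_⟩
      · simpa using A.mul_mem h (A.inv_mem hbA)
      · simpa using B.mul_mem (B.inv_mem haB) h
    · exact ⟨b, hbA, hb⟩
  · exact ⟨a, ha, haB⟩

/-- If the base group of an HNN extension is abelian and both associated
subgroups are proper, then the base group is self-centralizing. -/
theorem centralizer_of_range {G : Type*} [CommGroup G] {A B : Subgroup G}
    (hA : A ≠ ⊤) (hB : B ≠ ⊤) (φ : A ≃* B) :
    Subgroup.centralizer
        (((of : G →* HNNExtension G A B φ).range : Subgroup _) :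
          Set (HNNExtension G A B φ)) =
      (of : G →* HNNExtension G A B φ).range := by
  obtain ⟨c, hcA, hcB⟩ := exists_not_mem_union hA hB
  ext x
  constructor
  · intro hx
    rcases TransversalPair.nonempty G A B with ⟨d⟩
    set w : NormalWord d := x • (NormalWord.empty : NormalWord d) with hwdef
    have hw : w.prod φ = x := by simp [hwdef]
    rcases List.eq_nil_or_concat w.toList with hnil | ⟨L, a, hcons⟩
    on_goal 2 => rw [List.concat_eq_append] at hcons
    · refine ⟨w.head, ?_⟩
      rw [← hw]
      simp [ReducedWord.prod, hnil]
    · exfalso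
      -- the reduced word `w * c`, obtained by multiplying the last letter by `c`
      have hchain : (L ++ [(a.1, a.2 * c)]).Chain'
          (fun p q => p.2 ∈ toSubgroup A B p.1 → p.1 = q.1) := by
        have := w.chain
        rw [hcons] at this
        rw [List.isChain_append] at this
        show List.IsChain _ _
        rw [List.isChain_append]
        refine ⟨this.1, List.isChain_singleton _, ?_⟩
        intro p hp q hq
        simp only [List.head?_cons, Option.mem_def, Option.some.injEq] at hq
        subst hq
        exact this.2.2 p hp a (by simp)
      let w₁ : ReducedWord G A B := ⟨w.head, L ++ [(a.1, a.2 * c)], hchain⟩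
      let w₂ : ReducedWord G A B := ⟨c * w.head, w.toList, w.chain⟩
      have hw₁ : w₁.prod φ = x * of c := by
        rw [← hw]
        simp only [w₁, ReducedWord.prod, hcons, List.map_append,
          List.prod_append, List.map_cons, List.map_nil, List.prod_cons, List.prod_nil,
          _root_.map_mul, mul_one, mul_assoc]
      have hw₂ : w₂.prod φ = of c * x := by
        rw [← hw]
        simp only [w₂, ReducedWord.prod, _root_.map_mul, mul_assoc]
      have hcomm : of c * x = x * of c :=
        (Subgroup.mem_centralizer_iff.1 hx) (of c) ⟨c, rfl⟩
      have hprod : w₁.prod φ = w₂.prod φ := by rw [hw₁, hw₂, hcomm]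
      have h2 := (ReducedWord.map_fst_eq_and_of_prod_eq φ hprod).2
      have hne : w₁.toList ≠ [] := by simp [w₁]
      have hmem : (w₁.toList.head hne).1 ∈ w₁.toList.head?.map Prod.fst := by
        rw [List.head?_eq_head hne]; rfl
      have h3 := h2 _ hmem
      have hch : w₁.head⁻¹ * w₂.head = c := by
        show w.head⁻¹ * (c * w.head) = c
        rw [mul_comm c w.head, ← mul_assoc, inv_mul_cancel, one_mul]
      rw [hch] at h3
      rcases Int.units_eq_one_or (w₁.toList.head hne).1 with h | h <;> rw [h] at h3
      · exact hcB h3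
      · rw [neg_neg] at h3
        exact hcA h3
  · rintro ⟨g, rfl⟩
    rw [Subgroup.mem_centralizer_iff]
    rintro y ⟨g', rfl⟩
    rw [← _root_.map_mul, ← _root_.map_mul, mul_comm]


/-- The rational coordinate vector of an element of `ℤⁿ` (written
multiplicatively). -/
def ratVec {n : ℕ} (v : Multiplicative (Fin n → ℤ)) : Fin n → ℚ :=
  fun i => ((Multiplicative.toAdd v) i : ℚ)

/-- If both `L'` and `L'' = A·L'` are proper subgroups of `L = ℤⁿ`, then the
base group `L` is self-centralizing in the HNN-extension `G = G(A, L')`: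
the centralizer of (the image of) `L` in `G` equals (the image of) `L`. -/
theorem base_self_centralizing (n : ℕ)
    (A : Matrix (Fin n) (Fin n) ℚ) (hA : IsUnit A.det)
    (L' L'' : Subgroup (Multiplicative (Fin n → ℤ)))
    (hfi : L'.index ≠ 0)
    (hL' : L' ≠ ⊤) (hL'' : L'' ≠ ⊤)
    (φ : L' ≃* L'')
    (hφ : ∀ v : L', ratVec ((φ v : L'') : Multiplicative (Fin n → ℤ)) =
      A.mulVec (ratVec ((v : Multiplicative (Fin n → ℤ))))) :
    Subgroup.centralizer
        (((HNNExtension.of :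
          Multiplicative (Fin n → ℤ) →* HNNExtension _ L' L'' φ).range : Subgroup _) :
          Set (HNNExtension (Multiplicative (Fin n → ℤ)) L' L'' φ)) =
      (HNNExtension.of :
        Multiplicative (Fin n → ℤ) →* HNNExtension _ L' L'' φ).range := by
  exact centralizer_of_range hL' hL'' φ
end

section
/- In the group G = G(A, L'), every element of the normal closure of L centralizes some finite-index subgroup of L. -/
open Matrix

section Aux

variable {n : ℕ}

lemma ratVec_inj {v w : Multiplicative (Fin n → ℤ)} (h : ratVec v = ratVec w) : v = w := by
  have : Multiplicative.toAdd v = Multiplicative.toAdd w := by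
    funext i
    exact Int.cast_injective (congrFun h i)
  exact Multiplicative.toAdd.injective this

/-- The subgroup of `ℤⁿ` (multiplicative) of vectors with all coordinates divisible by `k`. -/
def zsub (n : ℕ) (k : ℤ) : Subgroup (Multiplicative (Fin n → ℤ)) where
  carrier := {v | ∀ i, k ∣ Multiplicative.toAdd v i}
  one_mem' := fun i => by simp
  mul_mem' := by
    intro a b ha hb i
    simpa using dvd_add (ha i) (hb i)
  inv_mem' := by
    intro a ha i
    simpa using (ha i).neg_right

lemma mem_zsub {k : ℤ} {v : Multiplicative (Fin n → ℤ)} :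
    v ∈ zsub n k ↔ ∀ i, k ∣ Multiplicative.toAdd v i := Iff.rfl

lemma zsub_index_ne_zero (n : ℕ) (k : ℤ) (hk : k ≠ 0) : (zsub n k).index ≠ 0 := by
  have hm : k.natAbs ≠ 0 := Int.natAbs_ne_zero.2 hk
  haveI : NeZero k.natAbs := ⟨hm⟩
  let f : Multiplicative (Fin n → ℤ) →* Multiplicative (Fin n → ZMod k.natAbs) :=
    { toFun := fun v => Multiplicative.ofAdd fun i =>
        ((Multiplicative.toAdd v i : ℤ) : ZMod k.natAbs)
      map_one' := by
        apply congrArg Multiplicative.ofAdd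
        funext i
        simp
      map_mul' := by
        intro a b
        rw [← ofAdd_add]
        apply congrArg Multiplicative.ofAdd
        funext i
        simp }
  have hker : zsub n k = f.ker := by
    ext v
    rw [MonoidHom.mem_ker, mem_zsub]
    constructor
    · intro h
      apply congrArg Multiplicative.ofAdd
      funext i
      have : ((k.natAbs : ℤ)) ∣ Multiplicative.toAdd v i := (Int.natAbs_dvd.2 (h i))
      simpa using (ZMod.intCast_zmod_eq_zero_iff_dvd _ _).2 this
    · intro h i
      have h' : ((Multiplicative.toAdd v i : ℤ) : ZMod k.natAbs) = 0 := by
        have := congrFun (congrArg Multiplicative.toAdd h) i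
        exact this
      have := (ZMod.intCast_zmod_eq_zero_iff_dvd _ _).1 h'
      exact (Int.natAbs_dvd.1 this)
  rw [hker, Subgroup.index_ker]
  haveI : Finite (Multiplicative (Fin n → ZMod k.natAbs)) := by
    have : Finite (Fin n → ZMod k.natAbs) := inferInstance
    exact this
  haveI : Nonempty f.range := ⟨1⟩
  exact Nat.card_pos.ne'

lemma exists_int_matrix (M : Matrix (Fin n) (Fin n) ℚ) :
    ∃ (d : ℕ) (C : Matrix (Fin n) (Fin n) ℤ), d ≠ 0 ∧
      ∀ i j, ((C i j : ℚ)) = (d : ℚ) * M i j := by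
  classical
  set d : ℕ := ∏ p : Fin n × Fin n, (M p.1 p.2).den with hd
  have hd0 : d ≠ 0 := by
    apply Finset.prod_ne_zero_iff.2
    intro p _
    exact (M p.1 p.2).den_nz
  have key : ∀ i j, ∃ z : ℤ, (z : ℚ) = (d : ℚ) * M i j := by
    intro i j
    obtain ⟨e, he⟩ : (M i j).den ∣ d := Finset.dvd_prod_of_mem _ (Finset.mem_univ (i, j))
    refine ⟨(e : ℤ) * (M i j).num, ?_⟩
    have hden : ((M i j).den : ℚ) ≠ 0 := by
      exact_mod_cast (M i j).den_nz
    have hnum : ((M i j).den : ℚ) * M i j = (M i j).num := by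
      rw [mul_comm]
      exact (eq_div_iff hden).mp (Rat.num_div_den (M i j)).symm
    push_cast [he]
    rw [mul_comm ((M i j).den : ℚ) (e : ℚ), mul_assoc, hnum]
  choose C hC using fun i j => key i j
  exact ⟨d, fun i j => C i j, hd0, hC⟩

lemma cast_mulVec (C : Matrix (Fin n) (Fin n) ℤ) (u : Fin n → ℤ) (i : Fin n) :
    ((C.mulVec u i : ℤ) : ℚ) = (C.map (Int.cast : ℤ → ℚ)).mulVec (fun j => (u j : ℚ)) i := by
  simp only [Matrix.mulVec, dotProduct, Matrix.map_apply]
  push_cast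
  rfl

lemma pow_index_mem' (K : Subgroup (Multiplicative (Fin n → ℤ)))
    (x : Multiplicative (Fin n → ℤ)) : x ^ K.index ∈ K :=
  K.pow_index_mem x

lemma ofAdd_mul_pow (m : ℕ) (c : Fin n → ℤ) (a : ℤ) :
    Multiplicative.ofAdd (fun i => ((m : ℤ) * a) * c i) =
      (Multiplicative.ofAdd (fun i => a * c i)) ^ m := by
  rw [← ofAdd_nsmul]
  apply congrArg Multiplicative.ofAdd
  funext i
  simp [mul_assoc]

end Aux

section Core

variable {n : ℕ} (A : Matrix (Fin n) (Fin n) ℚ) (hA : IsUnit A.det)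
  (L' L'' : Subgroup (Multiplicative (Fin n → ℤ)))
  (hfi : L'.index ≠ 0) (φ : L' ≃* L'')
  (hφ : ∀ v : L', ratVec ((φ v : L'') : Multiplicative (Fin n → ℤ)) =
      A.mulVec (ratVec ((v : Multiplicative (Fin n → ℤ)))))

include hA hfi hφ in
/-- core lemma for conjugation by `t`: every finite index `K` has a finite index `K'`
such that every element of `K'` is the image under `φ` of an element of `K ⊓ L'`. -/
lemma coreT (K : Subgroup (Multiplicative (Fin n → ℤ))) (hK : K.index ≠ 0) :
    ∃ K' : Subgroup (Multiplicative (Fin n → ℤ)), K'.index ≠ 0 ∧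
      ∀ w ∈ K', ∃ v, v ∈ K ∧ ∃ hv : v ∈ L',
        ((φ ⟨v, hv⟩ : L'') : Multiplicative (Fin n → ℤ)) = w := by
  classical
  obtain ⟨d, C, hd, hC⟩ := exists_int_matrix A⁻¹
  set M : ℤ := (d : ℤ) * (K.index : ℤ) * (L'.index : ℤ) with hM
  have hM0 : M ≠ 0 := by
    exact mul_ne_zero (mul_ne_zero (Int.natCast_ne_zero.2 hd) (Int.natCast_ne_zero.2 hK))
      (Int.natCast_ne_zero.2 hfi)
  refine ⟨zsub n M, zsub_index_ne_zero n M hM0, ?_⟩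
  intro w hw
  choose u hu using fun i => (mem_zsub.1 hw i)
  set cu : Fin n → ℤ := C.mulVec u with hcu
  set v : Multiplicative (Fin n → ℤ) :=
    Multiplicative.ofAdd (fun i => ((K.index : ℤ) * (L'.index : ℤ)) * cu i) with hv
  have hvK : v ∈ K := by
    have : v = (Multiplicative.ofAdd (fun i => (L'.index : ℤ) * cu i)) ^ K.index :=
      ofAdd_mul_pow K.index cu (L'.index : ℤ)
    rw [this]
    exact pow_index_mem' K _
  have hvL : v ∈ L' := by
    have h1 : v = Multiplicative.ofAdd (fun i => ((L'.index : ℤ) * (K.index : ℤ)) * cu i) := by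
      apply congrArg Multiplicative.ofAdd
      funext i
      ring
    have h2 : Multiplicative.ofAdd (fun i => ((L'.index : ℤ) * (K.index : ℤ)) * cu i) =
        (Multiplicative.ofAdd (fun i => (K.index : ℤ) * cu i)) ^ L'.index :=
      ofAdd_mul_pow L'.index cu (K.index : ℤ)
    rw [h1, h2]
    exact pow_index_mem' L' _
  refine ⟨v, hvK, hvL, ?_⟩
  apply ratVec_inj
  rw [hφ ⟨v, hvL⟩]
  have hCmap : C.map (Int.cast : ℤ → ℚ) = (d : ℚ) • A⁻¹ := by
    ext i j
    simp [Matrix.map_apply, hC i j]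
  have hrv : ratVec v = (((K.index : ℤ) * (L'.index : ℤ) * (d : ℤ) : ℤ) : ℚ) •
      (A⁻¹.mulVec (fun j => (u j : ℚ))) := by
    funext i
    simp only [ratVec, hv, toAdd_ofAdd, Pi.smul_apply, smul_eq_mul]
    push_cast
    rw [show ((cu i : ℤ) : ℚ) = ((C.mulVec u i : ℤ) : ℚ) from rfl, cast_mulVec, hCmap]
    simp only [Matrix.smul_mulVec, Pi.smul_apply, smul_eq_mul]
    ring
  rw [hrv, Matrix.mulVec_smul, Matrix.mulVec_mulVec, Matrix.mul_nonsing_inv A hA,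
    Matrix.one_mulVec]
  funext i
  simp only [ratVec, Pi.smul_apply, smul_eq_mul, hu i, hM]
  push_cast
  ring

include hA hfi hφ in
/-- core lemma for conjugation by `t⁻¹` : every finite index `K` has a finite index `K'`
contained in `L'` which `φ` maps into `K`. -/
lemma coreT' (K : Subgroup (Multiplicative (Fin n → ℤ))) (hK : K.index ≠ 0) :
    ∃ K' : Subgroup (Multiplicative (Fin n → ℤ)), K'.index ≠ 0 ∧
      ∀ w ∈ K', ∃ hw : w ∈ L',
        ((φ ⟨w, hw⟩ : L'') : Multiplicative (Fin n → ℤ)) ∈ K := by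
  classical
  obtain ⟨d, C, hd, hC⟩ := exists_int_matrix A
  set M : ℤ := (d : ℤ) * (K.index : ℤ) * (L'.index : ℤ) with hM
  have hM0 : M ≠ 0 := by
    exact mul_ne_zero (mul_ne_zero (Int.natCast_ne_zero.2 hd) (Int.natCast_ne_zero.2 hK))
      (Int.natCast_ne_zero.2 hfi)
  refine ⟨zsub n M, zsub_index_ne_zero n M hM0, ?_⟩
  intro w hw
  choose u hu using fun i => (mem_zsub.1 hw i)
  have hwadd : w = Multiplicative.ofAdd (fun i => M * u i) := by
    apply Multiplicative.toAdd.injective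
    funext i
    exact hu i
  have hwL : w ∈ L' := by
    have h1 : w = Multiplicative.ofAdd
        (fun i => ((L'.index : ℤ) * ((d : ℤ) * (K.index : ℤ))) * u i) := by
      rw [hwadd]
      apply congrArg Multiplicative.ofAdd
      funext i
      ring
    rw [h1, ofAdd_mul_pow L'.index u ((d : ℤ) * (K.index : ℤ))]
    exact pow_index_mem' L' _
  refine ⟨hwL, ?_⟩
  set cu : Fin n → ℤ := C.mulVec u with hcu
  have heq : ((φ ⟨w, hwL⟩ : L'') : Multiplicative (Fin n → ℤ)) =
      Multiplicative.ofAdd (fun i => ((K.index : ℤ) * (L'.index : ℤ)) * cu i) := by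
    apply ratVec_inj
    rw [hφ ⟨w, hwL⟩]
    have hCmap : C.map (Int.cast : ℤ → ℚ) = (d : ℚ) • A := by
      ext i j
      simp [Matrix.map_apply, hC i j]
    have hrw : ratVec (w : Multiplicative (Fin n → ℤ)) =
        ((M : ℤ) : ℚ) • (fun j => (u j : ℚ)) := by
      funext i
      simp only [ratVec, Pi.smul_apply, smul_eq_mul, hu i]
      push_cast
      ring
    rw [hrw, Matrix.mulVec_smul]
    funext i
    simp only [ratVec, toAdd_ofAdd, Pi.smul_apply, smul_eq_mul]
    push_cast
    rw [show ((cu i : ℤ) : ℚ) = ((C.mulVec u i : ℤ) : ℚ) from rfl, cast_mulVec, hCmap]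
    simp only [Matrix.smul_mulVec, Pi.smul_apply, smul_eq_mul]
    push_cast [hM]
    ring
  rw [heq, ofAdd_mul_pow K.index cu (L'.index : ℤ)]
  exact pow_index_mem' K _

end Core

/-- In the HNN-extension `G = G(A, L')` of `L = ℤⁿ`, every element of the
normal closure of (the image of) `L` centralizes some finite-index subgroup
of `L`. -/
theorem normal_closure_elements_centralize_finite_index (n : ℕ)
    (A : Matrix (Fin n) (Fin n) ℚ) (hA : IsUnit A.det)
    (L' L'' : Subgroup (Multiplicative (Fin n → ℤ)))
    (hfi : L'.index ≠ 0)
    (φ : L' ≃* L'')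
    (hφ : ∀ v : L', ratVec ((φ v : L'') : Multiplicative (Fin n → ℤ)) =
      A.mulVec (ratVec ((v : Multiplicative (Fin n → ℤ))))) :
    ∀ g ∈ Subgroup.normalClosure
        (((HNNExtension.of :
          Multiplicative (Fin n → ℤ) →* HNNExtension _ L' L'' φ).range : Subgroup _) :
          Set (HNNExtension (Multiplicative (Fin n → ℤ)) L' L'' φ)),
      ∃ K : Subgroup (Multiplicative (Fin n → ℤ)), K.index ≠ 0 ∧
        ∀ c ∈ K, g * HNNExtension.of c = HNNExtension.of c * g := by
  classical
  set H := HNNExtension (Multiplicative (Fin n → ℤ)) L' L'' φ with hH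
  let of' : Multiplicative (Fin n → ℤ) →* H := HNNExtension.of
  let C : Subgroup H :=
    { carrier := {g | ∃ K : Subgroup (Multiplicative (Fin n → ℤ)), K.index ≠ 0 ∧
        ∀ c ∈ K, g * of' c = of' c * g}
      one_mem' := ⟨⊤, by simp [Subgroup.index_top], fun c _ => by rw [one_mul, mul_one]⟩
      mul_mem' := by
        rintro a b ⟨K₁, h₁, hc₁⟩ ⟨K₂, h₂, hc₂⟩
        refine ⟨K₁ ⊓ K₂, Subgroup.index_inf_ne_zero h₁ h₂, fun c hc => ?_⟩
        have ha : Commute a (of' c) := hc₁ c hc.1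
        have hb : Commute b (of' c) := hc₂ c hc.2
        exact (ha.mul_left hb).eq
      inv_mem' := by
        rintro a ⟨K, hK, hc⟩
        refine ⟨K, hK, fun c hc' => ?_⟩
        have h : Commute a (of' c) := hc c hc'
        exact (h.inv_left).eq }
  have hof : ∀ d : Multiplicative (Fin n → ℤ), of' d ∈ C := by
    intro d
    exact ⟨⊤, by simp [Subgroup.index_top], fun c _ => by
      rw [← _root_.map_mul, ← _root_.map_mul, mul_comm]⟩
  have hofcomm : ∀ d c : Multiplicative (Fin n → ℤ), Commute (of' d) (of' c) := by
    intro d c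
    rw [Commute, SemiconjBy, ← _root_.map_mul, ← _root_.map_mul, mul_comm]
  have hnorm : ∀ x : H, ∀ g ∈ C, x * g * x⁻¹ ∈ C ∧ x⁻¹ * g * x ∈ C := by
    intro x
    induction x using HNNExtension.induction_on with
    | of d =>
      rintro g ⟨K, hK, hc⟩
      constructor
      · refine ⟨K, hK, fun c hc' => ?_⟩
        exact ((((hofcomm d c).mul_left (hc c hc')).mul_left ((hofcomm d c).inv_left))).eq
      · refine ⟨K, hK, fun c hc' => ?_⟩
        have h1 : Commute (of' d)⁻¹ (of' c) := (hofcomm d c).inv_left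
        exact (((h1.mul_left (hc c hc')).mul_left (hofcomm d c))).eq
    | t =>
      rintro g ⟨K, hK, hc⟩
      constructor
      · obtain ⟨K', hK', hmap⟩ := coreT A hA L' L'' hfi φ hφ K hK
        refine ⟨K', hK', fun w hw => ?_⟩
        obtain ⟨v, hvK, hv, heq⟩ := hmap w hw
        have hcom : Commute g (of' v) := hc v hvK
        have := hcom.map (MulAut.conj (HNNExtension.t : H)).toMonoidHom
        simp only [MulEquiv.coe_toMonoidHom, MulAut.conj_apply] at this
        have hw' : of' w = HNNExtension.t * of' v * HNNExtension.t⁻¹ := by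
          rw [← heq]
          exact HNNExtension.equiv_eq_conj (φ := φ) ⟨v, hv⟩
        rw [hw']
        exact this.eq
      · obtain ⟨K', hK', hmap⟩ := coreT' A hA L' L'' hfi φ hφ K hK
        refine ⟨K', hK', fun w hw => ?_⟩
        obtain ⟨hwL, hmem⟩ := hmap w hw
        have hcom : Commute g (of' ((φ ⟨w, hwL⟩ : L'') : Multiplicative (Fin n → ℤ))) :=
          hc _ hmem
        have := hcom.map (MulAut.conj ((HNNExtension.t : H))⁻¹).toMonoidHom
        simp only [MulEquiv.coe_toMonoidHom, MulAut.conj_apply, inv_inv] at this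
        have hw' : of' w = HNNExtension.t⁻¹ *
            of' ((φ ⟨w, hwL⟩ : L'') : Multiplicative (Fin n → ℤ)) * HNNExtension.t := by
          have h2 := HNNExtension.equiv_symm_eq_conj (φ := φ) (φ ⟨w, hwL⟩)
          rw [MulEquiv.symm_apply_apply] at h2
          exact h2
        rw [hw']
        exact this.eq
    | mul x y hx hy =>
      intro g hg
      constructor
      · have h1 := (hy g hg).1
        have h2 := (hx _ h1).1
        have : x * y * g * (x * y)⁻¹ = x * (y * g * y⁻¹) * x⁻¹ := by
          group
        rw [this]
        exact h2
      · have h1 := (hx g hg).2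
        have h2 := (hy _ h1).2
        have : (x * y)⁻¹ * g * (x * y) = y⁻¹ * (x⁻¹ * g * x) * y := by
          group
        rw [this]
        exact h2
    | inv x hx =>
      intro g hg
      refine ⟨?_, ?_⟩
      · have := (hx g hg).2
        have e : x⁻¹⁻¹ = x := inv_inv x
        rw [e]
        exact this
      · have := (hx g hg).1
        have e : x⁻¹⁻¹ = x := inv_inv x
        rw [e]
        exact this
  haveI hCnormal : C.Normal := ⟨fun g hg x => (hnorm x g hg).1⟩
  have hsub : ((HNNExtension.of :
      Multiplicative (Fin n → ℤ) →* H).range : Subgroup H) ≤ C := by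
    rintro _ ⟨d, rfl⟩
    exact hof d
  intro g hg
  exact Subgroup.normalClosure_le_normal hsub hg
end

section
/- Suppose A ∈ GL(2, Q) has order at least 3 and is conjugate in GL(2, R) to an element of SO(2). Then, up to a positive scalar multiple, there is a unique inner product on R² preserved by A. -/
open Matrix

/-- `B` is an inner product on `ℝ²` (as a bilinear symmetric positive-definite
form). -/
def IsInnerProd (B : (Fin 2 → ℝ) → (Fin 2 → ℝ) → ℝ) : Prop :=
  (∀ v w, B v w = B w v) ∧
  (∀ u v w, B (u + v) w = B u w + B v w) ∧
  (∀ (c : ℝ) (v w), B (c • v) w = c * B v w) ∧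
  (∀ v, v ≠ 0 → 0 < B v v)

lemma vec_decomp (v : Fin 2 → ℝ) :
    v = v 0 • (Pi.single 0 1 : Fin 2 → ℝ) + v 1 • (Pi.single 1 1 : Fin 2 → ℝ) := by
  funext i; fin_cases i <;> simp

lemma entry_eq (M : Matrix (Fin 2) (Fin 2) ℝ) (i j : Fin 2) :
    (Pi.single i 1 : Fin 2 → ℝ) ⬝ᵥ (M *ᵥ Pi.single j 1) = M i j := by
  fin_cases i <;> fin_cases j <;>
    simp [dotProduct, mulVec, Pi.single_apply, Fin.sum_univ_two]

lemma dot_conj (A G : Matrix (Fin 2) (Fin 2) ℝ) (v w : Fin 2 → ℝ) :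
    (A *ᵥ v) ⬝ᵥ (G *ᵥ (A *ᵥ w)) = v ⬝ᵥ ((Aᵀ * G * A) *ᵥ w) := by
  simp [dotProduct, mulVec, mul_apply, Fin.sum_univ_two]
  ring

lemma dot_rot (R : Matrix (Fin 2) (Fin 2) ℝ) (v w : Fin 2 → ℝ) :
    (R *ᵥ v) ⬝ᵥ (R *ᵥ w) = v ⬝ᵥ ((Rᵀ * R) *ᵥ w) := by
  simp [dotProduct, mulVec, mul_apply, Fin.sum_univ_two]
  ring

lemma form_eq (B : (Fin 2 → ℝ) → (Fin 2 → ℝ) → ℝ)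
    (hsym : ∀ v w, B v w = B w v)
    (hadd : ∀ u v w, B (u + v) w = B u w + B v w)
    (hsmul : ∀ (c : ℝ) (v w), B (c • v) w = c * B v w)
    (v w : Fin 2 → ℝ) :
    B v w = v ⬝ᵥ ((Matrix.of fun i j => B (Pi.single i 1) (Pi.single j 1)) *ᵥ w) := by
  have haddr : ∀ u v w : Fin 2 → ℝ, B u (v + w) = B u v + B u w := by
    intro u v w; rw [hsym, hadd, hsym v u, hsym w u]
  have hsmulr : ∀ (c : ℝ) (u v : Fin 2 → ℝ), B u (c • v) = c * B u v := by
    intro c u v; rw [hsym, hsmul, hsym v u]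
  conv_lhs => rw [vec_decomp v, vec_decomp w]
  rw [hadd, hsmul, hsmul, haddr, haddr, hsmulr, hsmulr, hsmulr, hsmulr]
  simp [dotProduct, mulVec, Pi.single_apply, Fin.sum_univ_two]
  ring

lemma so2 (a b c d : ℝ) (h00 : a * a + c * c = 1) (h01 : a * b + c * d = 0)
    (hdet : a * d - b * c = 1) : d = a ∧ b = -c := by
  constructor
  · linear_combination a * hdet - d * h00 + c * h01
  · linear_combination (-b) * h00 + a * h01 - c * hdet

lemma commutant (a c p q r : ℝ) (ha : a * a + c * c = 1) (hc : c ≠ 0)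
    (e1 : p * (a * a) + q * (2 * a * c) + r * (c * c) = p)
    (e2 : -(a * c) * p + (a * a - c * c) * q + (a * c) * r = q) : r = p ∧ q = 0 := by
  have h1 : 2 * a * q - c * (p - r) = 0 :=
    mul_left_cancel₀ hc (by linear_combination e1 - p * ha)
  have h2 : a * (r - p) - 2 * c * q = 0 :=
    mul_left_cancel₀ hc (by linear_combination e2 - q * ha)
  have hrp : r = p := by
    have h3 : (a * a + c * c) * (r - p) = 0 := by linear_combination a * h2 + c * h1
    rw [ha] at h3; linarith
  refine ⟨hrp, ?_⟩
  rw [hrp] at h2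
  have h5 : c * q = 0 := by linear_combination (-1/2 : ℝ) * h2
  rcases mul_eq_zero.mp h5 with h | h
  · exact absurd h hc
  · exact h

lemma key (A' P R : Matrix (Fin 2) (Fin 2) ℝ) (hP : IsUnit P.det)
    (h00 : R 0 0 * R 0 0 + R 1 0 * R 1 0 = 1)
    (hd : R 1 1 = R 0 0) (hb : R 0 1 = -(R 1 0)) (hc : R 1 0 ≠ 0)
    (heq : A' = P * R * P⁻¹)
    (B : (Fin 2 → ℝ) → (Fin 2 → ℝ) → ℝ) (hB : IsInnerProd B)
    (hinv : ∀ v w, B (A' *ᵥ v) (A' *ᵥ w) = B v w) :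
    ∃ p : ℝ, 0 < p ∧ ∀ v w, B v w = p * (v ⬝ᵥ (((Pᵀ)⁻¹ * P⁻¹) *ᵥ w)) := by
  obtain ⟨hsym, hadd, hsmul, hpos⟩ := hB
  have hPP : P * P⁻¹ = 1 := mul_nonsing_inv P hP
  have hPP' : P⁻¹ * P = 1 := nonsing_inv_mul P hP
  have hPt : IsUnit Pᵀ.det := by rwa [det_transpose]
  have hPPt : (Pᵀ)⁻¹ * Pᵀ = 1 := nonsing_inv_mul Pᵀ hPt
  set G : Matrix (Fin 2) (Fin 2) ℝ :=
    Matrix.of fun i j => B (Pi.single i 1) (Pi.single j 1) with hGdef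
  have hrep : ∀ v w, B v w = v ⬝ᵥ (G *ᵥ w) := form_eq B hsym hadd hsmul
  have hGinv : A'ᵀ * G * A' = G := by
    ext i j
    have h := hinv (Pi.single i 1) (Pi.single j 1)
    rw [hrep, hrep, dot_conj, entry_eq, entry_eq] at h
    exact h
  have hAP : A' * P = P * R := by
    rw [heq, Matrix.mul_assoc, hPP', Matrix.mul_one]
  set Q : Matrix (Fin 2) (Fin 2) ℝ := Pᵀ * G * P with hQdef
  have hQR : Rᵀ * Q * R = Q := by
    have e1 : Rᵀ * Q * R = (P * R)ᵀ * G * (P * R) := by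
      rw [hQdef]; simp only [transpose_mul, Matrix.mul_assoc]
    have e2 : (A' * P)ᵀ * G * (A' * P) = Pᵀ * G * P := by
      simp only [transpose_mul, Matrix.mul_assoc]
      congr 1
      rw [← Matrix.mul_assoc G A' P, ← Matrix.mul_assoc A'ᵀ (G * A') P,
        ← Matrix.mul_assoc A'ᵀ G A', hGinv]
    rw [e1, ← hAP, e2, hQdef]
  have hQsym : Q 1 0 = Q 0 1 := by
    have hGsym : G 1 0 = G 0 1 := hsym _ _
    simp only [hQdef, mul_apply, Fin.sum_univ_two, transpose_apply]
    rw [hGsym]; ring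
  have hq1 := congrFun (congrFun hQR 0) 0
  have hq2 := congrFun (congrFun hQR 0) 1
  simp only [mul_apply, Fin.sum_univ_two, transpose_apply] at hq1 hq2
  rw [hQsym] at hq1 hq2
  rw [hd, hb] at hq2
  obtain ⟨hr, hq⟩ := commutant (R 0 0) (R 1 0) (Q 0 0) (Q 0 1) (Q 1 1) h00 hc
    (by linear_combination hq1) (by linear_combination hq2)
  have hQ : Q = Q 0 0 • (1 : Matrix (Fin 2) (Fin 2) ℝ) := by
    ext i j
    fin_cases i <;> fin_cases j <;> simp [one_apply, hr, hq, hQsym]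
  have hx : P *ᵥ (Pi.single 0 1 : Fin 2 → ℝ) ≠ 0 := by
    intro h
    have h2 : P⁻¹ *ᵥ (P *ᵥ (Pi.single 0 1 : Fin 2 → ℝ)) = 0 := by
      rw [h, mulVec_zero]
    rw [mulVec_mulVec, hPP', one_mulVec] at h2
    have := congrFun h2 0
    simp at this
  have hp : 0 < Q 0 0 := by
    have h := hpos _ hx
    rw [hrep, dot_conj, entry_eq] at h
    exact h
  have hG : G = Q 0 0 • ((Pᵀ)⁻¹ * P⁻¹) := by
    have h : (Pᵀ)⁻¹ * Q * P⁻¹ = G := by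
      rw [hQdef]
      calc (Pᵀ)⁻¹ * (Pᵀ * G * P) * P⁻¹
          = ((Pᵀ)⁻¹ * Pᵀ) * G * (P * P⁻¹) := by simp only [Matrix.mul_assoc]
        _ = G := by rw [hPPt, hPP, Matrix.one_mul, Matrix.mul_one]
    rw [← h, hQ]
    simp [Matrix.mul_smul, Matrix.smul_mul]
  refine ⟨Q 0 0, hp, fun v w => ?_⟩
  rw [hrep, hG]
  simp [smul_mulVec, dotProduct_smul, smul_eq_mul]
  ring


/-- Suppose `A ∈ GL(2, ℚ)` has order at least 3 and is conjugate in `GL(2, ℝ)`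
to an element of `SO(2)`.  Then, up to a positive scalar multiple, there is a
unique inner product on `ℝ²` preserved by `A`. -/
theorem unique_invariant_inner_product (A : Matrix (Fin 2) (Fin 2) ℚ)
    (hA : IsUnit A.det) (h1 : A ≠ 1) (h2 : A ^ 2 ≠ 1)
    (hconj : ∃ P B : Matrix (Fin 2) (Fin 2) ℝ, IsUnit P.det ∧ Bᵀ * B = 1 ∧ B.det = 1 ∧
      A.map (fun q : ℚ => (q : ℝ)) = P * B * P⁻¹) :
    (∃ B : (Fin 2 → ℝ) → (Fin 2 → ℝ) → ℝ, IsInnerProd B ∧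
      ∀ v w, B ((A.map (fun q : ℚ => (q : ℝ))).mulVec v)
        ((A.map (fun q : ℚ => (q : ℝ))).mulVec w) = B v w) ∧
    ∀ B₁ B₂ : (Fin 2 → ℝ) → (Fin 2 → ℝ) → ℝ,
      IsInnerProd B₁ → IsInnerProd B₂ →
      (∀ v w, B₁ ((A.map (fun q : ℚ => (q : ℝ))).mulVec v)
        ((A.map (fun q : ℚ => (q : ℝ))).mulVec w) = B₁ v w) →
      (∀ v w, B₂ ((A.map (fun q : ℚ => (q : ℝ))).mulVec v)
        ((A.map (fun q : ℚ => (q : ℝ))).mulVec w) = B₂ v w) →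
      ∃ c : ℝ, 0 < c ∧ ∀ v w, B₁ v w = c * B₂ v w := by
  obtain ⟨P, R, hP, hR, hRdet, heq⟩ := hconj
  set A' := A.map (fun q : ℚ => (q : ℝ)) with hA'
  have hPP : P * P⁻¹ = 1 := mul_nonsing_inv P hP
  have hPP' : P⁻¹ * P = 1 := nonsing_inv_mul P hP
  have h00 : R 0 0 * R 0 0 + R 1 0 * R 1 0 = 1 := by
    have h := congrFun (congrFun hR 0) 0
    simpa [mul_apply, Fin.sum_univ_two, one_apply] using h
  have h01 : R 0 0 * R 0 1 + R 1 0 * R 1 1 = 0 := by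
    have h := congrFun (congrFun hR 0) 1
    simpa [mul_apply, Fin.sum_univ_two, one_apply] using h
  have hdet2 : R 0 0 * R 1 1 - R 0 1 * R 1 0 = 1 := by
    have := hRdet; rwa [det_fin_two] at this
  obtain ⟨hd, hb⟩ := so2 (R 0 0) (R 0 1) (R 1 0) (R 1 1) h00 h01 hdet2
  have hc : R 1 0 ≠ 0 := by
    intro hc0
    apply h2
    have ha2 : R 0 0 * R 0 0 = 1 := by rw [hc0] at h00; linarith
    have hb0 : R 0 1 = 0 := by rw [hb, hc0, neg_zero]
    have hRR : R * R = 1 := by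
      ext i j
      fin_cases i <;> fin_cases j <;>
        simp [mul_apply, Fin.sum_univ_two, one_apply, hb0, hc0, hd] <;>
        linear_combination ha2
    have hA'2 : A' * A' = 1 := by
      rw [heq]
      have e : P * R * P⁻¹ * (P * R * P⁻¹) = P * (R * ((P⁻¹ * P) * (R * P⁻¹))) := by
        simp only [Matrix.mul_assoc]
      rw [e, hPP', Matrix.one_mul, ← Matrix.mul_assoc R R, hRR, Matrix.one_mul, hPP]
    have hmap : (A ^ 2).map (fun q : ℚ => (q : ℝ)) = 1 := by
      rw [pow_two]
      have h : (A * A).map (fun q : ℚ => (q : ℝ)) = A' * A' := by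
        ext i j
        simp [Matrix.map_apply, mul_apply, Fin.sum_univ_two, hA']
      rw [h, hA'2]
    ext i j
    have h := congrFun (congrFun hmap i) j
    rw [Matrix.map_apply] at h
    fin_cases i <;> fin_cases j <;>
      simp [Matrix.one_apply] at h ⊢ <;> exact_mod_cast h
  constructor
  · refine ⟨fun v w => (P⁻¹ *ᵥ v) ⬝ᵥ (P⁻¹ *ᵥ w), ⟨?_, ?_, ?_, ?_⟩, ?_⟩
    · intro v w; exact dotProduct_comm _ _
    · intro u v w; dsimp only; rw [mulVec_add, add_dotProduct]
    · intro c v w; dsimp only; rw [mulVec_smul, smul_dotProduct, smul_eq_mul]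
    · intro v hv
      dsimp only
      have hx : P⁻¹ *ᵥ v ≠ 0 := by
        intro h
        apply hv
        have h2 : P *ᵥ (P⁻¹ *ᵥ v) = 0 := by rw [h, mulVec_zero]
        rwa [mulVec_mulVec, hPP, one_mulVec] at h2
      set x := P⁻¹ *ᵥ v with hxdef
      have h0 : x 0 ≠ 0 ∨ x 1 ≠ 0 := by
        by_contra hcon
        push_neg at hcon
        apply hx
        funext i; fin_cases i
        · exact hcon.1
        · exact hcon.2
      have hdd : x ⬝ᵥ x = x 0 * x 0 + x 1 * x 1 := by
        simp [dotProduct, Fin.sum_univ_two]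
      rw [hdd]
      rcases h0 with h | h
      · nlinarith [mul_self_nonneg (x 1), mul_self_pos.mpr h]
      · nlinarith [mul_self_nonneg (x 0), mul_self_pos.mpr h]
    · intro v w
      dsimp only
      have hPA : P⁻¹ * A' = R * P⁻¹ := by
        rw [heq, ← Matrix.mul_assoc, ← Matrix.mul_assoc, hPP', Matrix.one_mul]
      rw [mulVec_mulVec, mulVec_mulVec, hPA, ← mulVec_mulVec, ← mulVec_mulVec,
        dot_rot, hR, one_mulVec]
  · intro B₁ B₂ hB₁ hB₂ hinv₁ hinv₂
    obtain ⟨p₁, hp₁, hf₁⟩ := key A' P R hP h00 hd hb hc heq B₁ hB₁ hinv₁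
    obtain ⟨p₂, hp₂, hf₂⟩ := key A' P R hP h00 hd hb hc heq B₂ hB₂ hinv₂
    refine ⟨p₁ / p₂, div_pos hp₁ hp₂, fun v w => ?_⟩
    rw [hf₁, hf₂]
    field_simp
end
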